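/- arXiv:2010.07962 — 3 statements merged into one kernel-verified Lean document; each statement's English description precedes it below -/
import Mathlib

section
/- Under the stated assumptions, the total objective Φ(x) = f(x, y*(x)) is differentiable and its gradient satisfies, for every x ∈ ℝ^p, ∇Φ(x) = ∇_x f(x, y*(x)) − ∇_x∇_y g(x, y*(x)) v*(x), where v*(x) ∈ ℝ^q is the unique solution of the linear system ∇²_y g(x, y*(x)) v = ∇_y f(x, y*(x)). -/
open scoped RealInnerProductSpace
open MeasureTheory ProbabilityTheory

noncomputable section

section Aux
variable {E : Type*} [NormedAddCommGroup E] [InnerProductSpace ℝ E] [CompleteSpace E]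

lemma hasFDerivAt_half_norm_sq (μ : ℝ) (y : E) :
    HasFDerivAt (fun z : E => μ / 2 * ‖z‖ ^ 2)
      (InnerProductSpace.toDual ℝ E ((μ : ℝ) • y)) y := by
  have h1 : HasFDerivAt (fun z : E => ⟪z, z⟫)
      ((fderivInnerCLM ℝ (y, y)).comp
        ((ContinuousLinearMap.id ℝ E).prod (ContinuousLinearMap.id ℝ E))) y :=
    (hasFDerivAt_id y).inner ℝ (hasFDerivAt_id y)
  have h2 := h1.const_mul (μ / 2)
  have hfun : (fun z : E => μ / 2 * ⟪z, z⟫) = fun z : E => μ / 2 * ‖z‖ ^ 2 := by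
    funext z; rw [real_inner_self_eq_norm_sq]
  rw [hfun] at h2
  refine h2.congr_fderiv ?_
  ext w
  simp [InnerProductSpace.toDual_apply_apply, real_inner_smul_left, fderivInnerCLM_apply,
    real_inner_comm y w]
  ring

omit [CompleteSpace E] in
lemma convex_first_order {h : E → ℝ} (hcvx : ConvexOn ℝ Set.univ h)
    {y z : E} {d : E →L[ℝ] ℝ} (hd : HasFDerivAt h d y) :
    d (z - y) ≤ h z - h y := by
  set φ : ℝ → ℝ := fun t => h (y + t • (z - y)) with hφ
  have hc : HasDerivAt (fun t : ℝ => y + t • (z - y)) (z - y) 0 := by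
    simpa using ((hasDerivAt_id (0 : ℝ)).smul_const (z - y)).const_add y
  have hder : HasDerivAt φ (d (z - y)) 0 := by
    have := hd.comp_hasDerivAt_of_eq 0 hc (by simp)
    exact this
  rw [hasDerivAt_iff_tendsto_slope] at hder
  have hmono : Filter.Tendsto (slope φ 0) (nhdsWithin 0 (Set.Ioi 0)) (nhds (d (z - y))) :=
    hder.mono_left (nhdsWithin_mono _ (fun t ht => ne_of_gt ht))
  refine le_of_tendsto hmono ?_
  filter_upwards [Ioc_mem_nhdsGT_of_mem (Set.left_mem_Ico.2 one_pos)] with t ht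
  have h01 : (0:ℝ) ≤ 1 - t := by linarith [ht.2]
  have hconv := hcvx.2 (Set.mem_univ y) (Set.mem_univ z) h01 (le_of_lt ht.1) (by ring)
  simp only [smul_eq_mul] at hconv
  have heq : (1 - t) • y + t • z = y + t • (z - y) := by
    module
  rw [heq] at hconv
  have ht0 : (0:ℝ) < t := ht.1
  rw [slope_def_field]
  have : φ t - φ 0 ≤ t * (h z - h y) := by
    simp only [hφ]; simp only [zero_smul, add_zero]
    calc h (y + t • (z - y)) - h y ≤ ((1-t) * h y + t * h z) - h y := by linarith
    _ = t * (h z - h y) := by ring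
  rw [sub_zero, div_le_iff₀ ht0]
  simpa [mul_comm] using this

lemma strong_mono {μ : ℝ} {g : E → ℝ} {G : E → E}
    (hsc : StrongConvexOn Set.univ μ g)
    (hG : ∀ y, HasGradientAt g (G y) y) (y y' : E) :
    μ * ‖y - y'‖ ^ 2 ≤ ⟪G y - G y', y - y'⟫ := by
  rw [strongConvexOn_iff_convex] at hsc
  have hd : ∀ w : E, HasFDerivAt (fun z => g z - μ / 2 * ‖z‖ ^ 2)
      (InnerProductSpace.toDual ℝ E (G w - μ • w)) w := by
    intro w
    have := (hG w).hasFDerivAt.sub (hasFDerivAt_half_norm_sq μ w)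
    rw [map_sub]; exact this
  have e1 := convex_first_order hsc (hd y) (z := y')
  have e2 := convex_first_order hsc (hd y') (z := y)
  simp only [InnerProductSpace.toDual_apply_apply, inner_sub_left, inner_sub_right,
    real_inner_smul_left] at e1 e2 ⊢
  have hn : ‖y - y'‖ ^ 2 = ⟪y,y⟫ - ⟪y,y'⟫ - (⟪y',y⟫ - ⟪y',y'⟫) := by
    rw [← real_inner_self_eq_norm_sq]
    simp only [inner_sub_left, inner_sub_right]
    rw [real_inner_comm y' y]
  rw [hn]
  have hc1 : ⟪y, y'⟫ = ⟪y', y⟫ := real_inner_comm _ _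
  have hc2 : ⟪G y, y'⟫ = ⟪y', G y⟫ := real_inner_comm _ _
  have hc3 : ⟪G y', y⟫ = ⟪y, G y'⟫ := real_inner_comm _ _
  nlinarith [e1, e2]

end Aux

/-- `Eu n` is the Euclidean space `ℝ^n`. -/
abbrev Eu (n : ℕ) := EuclideanSpace ℝ (Fin n)

set_option maxHeartbeats 1600000 in
/-- Proposition 1: the hypergradient formula
`∇Φ(x) = ∇ₓf(x, y*(x)) − ∇ₓ∇_y g(x, y*(x)) v*(x)`, where `v*(x)` is the unique solution of
`∇²_y g(x, y*(x)) v = ∇_y f(x, y*(x))`. -/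
theorem hypergradient_formula {p q : ℕ}
    (f g : Eu p → Eu q → ℝ)
    (hf : ContDiff ℝ 2 (Function.uncurry f))
    (hg : ContDiff ℝ 2 (Function.uncurry g))
    (μ L M τ ρ : ℝ) (hμ : 0 < μ) (hμL : μ ≤ L)
    (gradxf gradxg : Eu p → Eu q → Eu p)
    (gradyf gradyg : Eu p → Eu q → Eu q)
    (hgradxf : ∀ x y, HasGradientAt (fun x' => f x' y) (gradxf x y) x)
    (hgradyf : ∀ x y, HasGradientAt (fun y' => f x y') (gradyf x y) y)
    (hgradxg : ∀ x y, HasGradientAt (fun x' => g x' y) (gradxg x y) x)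
    (hgradyg : ∀ x y, HasGradientAt (fun y' => g x y') (gradyg x y) y)
    (Hg : Eu p → Eu q → (Eu q →L[ℝ] Eu q))
    (Jg : Eu p → Eu q → (Eu q →L[ℝ] Eu p))
    (hHg : ∀ x y, HasFDerivAt (fun y' => gradyg x y') (Hg x y) y)
    (hJg : ∀ x y, HasFDerivAt (fun x' => gradyg x' y) (ContinuousLinearMap.adjoint (Jg x y)) x)
    (hsc : ∀ x, StrongConvexOn Set.univ μ (g x))
    (hfLip : ∀ x y x' y', |f x y - f x' y'| ≤ M * Real.sqrt (‖x - x'‖ ^ 2 + ‖y - y'‖ ^ 2))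
    (hgradfLip : ∀ x y x' y',
      Real.sqrt (‖gradxf x y - gradxf x' y'‖ ^ 2 + ‖gradyf x y - gradyf x' y'‖ ^ 2)
        ≤ L * Real.sqrt (‖x - x'‖ ^ 2 + ‖y - y'‖ ^ 2))
    (hgradgLip : ∀ x y x' y',
      Real.sqrt (‖gradxg x y - gradxg x' y'‖ ^ 2 + ‖gradyg x y - gradyg x' y'‖ ^ 2)
        ≤ L * Real.sqrt (‖x - x'‖ ^ 2 + ‖y - y'‖ ^ 2))
    (hJgLip : ∀ x y x' y', ‖Jg x y - Jg x' y'‖ ≤ τ * Real.sqrt (‖x - x'‖ ^ 2 + ‖y - y'‖ ^ 2))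
    (hHgLip : ∀ x y x' y', ‖Hg x y - Hg x' y'‖ ≤ ρ * Real.sqrt (‖x - x'‖ ^ 2 + ‖y - y'‖ ^ 2))
    (ystar : Eu p → Eu q)
    (hystar : ∀ x, IsMinOn (g x) Set.univ (ystar x))
    (vstar : Eu p → Eu q)
    (hvstar : ∀ x, Hg x (ystar x) (vstar x) = gradyf x (ystar x)) :
    (∀ x, HasGradientAt (fun x' => f x' (ystar x'))
        (gradxf x (ystar x) - Jg x (ystar x) (vstar x)) x) ∧
      (∀ x v, Hg x (ystar x) v = gradyf x (ystar x) → v = vstar x) := by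
  classical
  -- the minimizer is a critical point
  have hcrit : ∀ x, gradyg x (ystar x) = 0 := by
    intro x
    have hloc : IsLocalMin (g x) (ystar x) := (hystar x).isLocalMin Filter.univ_mem
    have h0 := hloc.hasFDerivAt_eq_zero (hgradyg x (ystar x)).hasFDerivAt
    have := congrArg (InnerProductSpace.toDual ℝ (Eu q)).symm h0
    simpa using this
  -- monotonicity of the gradient
  have hmono : ∀ x y y', μ * ‖y - y'‖ ^ 2 ≤ ⟪gradyg x y - gradyg x y', y - y'⟫ :=
    fun x => strong_mono (hsc x) (hgradyg x)
  -- coercivity of the Hessian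
  have hcoer : ∀ x y k, μ * ‖k‖ ^ 2 ≤ ⟪Hg x y k, k⟫ := by
    intro x y k
    have hc : HasDerivAt (fun t : ℝ => y + t • k) k 0 := by
      simpa using ((hasDerivAt_id (0:ℝ)).smul_const k).const_add y
    have hw : HasDerivAt (fun t : ℝ => gradyg x (y + t • k)) (Hg x y k) 0 :=
      (hHg x y).comp_hasDerivAt_of_eq 0 hc (by simp)
    have hφ : HasDerivAt (fun t : ℝ => ⟪gradyg x (y + t • k), k⟫) ⟪Hg x y k, k⟫ 0 := by
      simpa using hw.inner ℝ (hasDerivAt_const (0:ℝ) k)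
    rw [hasDerivAt_iff_tendsto_slope] at hφ
    refine ge_of_tendsto hφ ?_
    rw [Filter.eventually_iff_exists_mem]
    refine ⟨{0}ᶜ, self_mem_nhdsWithin, fun t ht => ?_⟩
    have ht0 : t ≠ 0 := ht
    have hm := hmono x (y + t • k) y
    have hsub : y + t • k - y = t • k := by abel
    rw [hsub, real_inner_smul_right] at hm
    have hns : ‖t • k‖ ^ 2 = t ^ 2 * ‖k‖ ^ 2 := by
      rw [norm_smul]; simp [mul_pow, sq_abs]
    rw [hns] at hm
    have ht2 : (0:ℝ) < t ^ 2 := by positivity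
    set d : ℝ := ⟪gradyg x (y + t • k) - gradyg x y, k⟫ with hdd
    have hs : slope (fun t : ℝ => ⟪gradyg x (y + t • k), k⟫) 0 t = d / t := by
      rw [slope_def_field, hdd, inner_sub_left]
      simp [zero_smul]
    rw [hs]
    have e1 : μ * ‖k‖ ^ 2 = μ * (t ^ 2 * ‖k‖ ^ 2) / t ^ 2 := by field_simp
    have e2 : (t * d) / t ^ 2 = d / t := by
      rw [sq, mul_div_mul_left _ _ ht0]
    rw [e1, ← e2]
    have := mul_le_mul_of_nonneg_right hm (le_of_lt (inv_pos.mpr ht2))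
    simpa [div_eq_mul_inv] using this
  -- injectivity of the Hessian
  have hinj : ∀ x y, Function.Injective (Hg x y) := by
    intro x y k k' hkk
    have h0 : Hg x y (k - k') = 0 := by rw [map_sub, hkk, sub_self]
    have := hcoer x y (k - k')
    rw [h0] at this
    simp only [inner_zero_left] at this
    have : ‖k - k'‖ ^ 2 ≤ 0 := by nlinarith
    have : k - k' = 0 := by
      have := pow_eq_zero_iff (n := 2) (by norm_num) |>.mp
        (le_antisymm this (by positivity))
      simpa using this
    exact sub_eq_zero.mp this
  have huniq : ∀ x v, Hg x (ystar x) v = gradyf x (ystar x) → v = vstar x := by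
    intro x v hv
    exact hinj x (ystar x) (hv.trans (hvstar x).symm)
  refine ⟨?_, huniq⟩
  intro x₀
  set y₀ := ystar x₀ with hy₀
  set T := Hg x₀ y₀ with hTdef
  set A := ContinuousLinearMap.adjoint (Jg x₀ y₀) with hAdef
  -- the map G(x, y) = ∇_y g(x, y) is C¹
  set G : Eu p × Eu q → Eu q := fun pr => gradyg pr.1 pr.2 with hGdef
  have hgdiff : Differentiable ℝ (Function.uncurry g) := hg.differentiable (by norm_num)
  have hFder : ∀ (x : Eu p) (y : Eu q),
      HasFDerivAt (fun y' => g x y')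
        ((fderiv ℝ (Function.uncurry g) (x, y)).comp
          (ContinuousLinearMap.inr ℝ (Eu p) (Eu q))) y := by
    intro x y
    have h1 : HasFDerivAt (Function.uncurry g) (fderiv ℝ (Function.uncurry g) (x, y)) (x, y) :=
      (hgdiff (x, y)).hasFDerivAt
    have h2 : HasFDerivAt (fun y' : Eu q => ((x, y') : Eu p × Eu q))
        (ContinuousLinearMap.inr ℝ (Eu p) (Eu q)) y :=
      HasFDerivAt.prodMk (hasFDerivAt_const x y) (hasFDerivAt_id y)
    exact h1.comp y h2
  have hFeq : ∀ (x : Eu p) (y : Eu q), InnerProductSpace.toDual ℝ (Eu q) (gradyg x y)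
      = (fderiv ℝ (Function.uncurry g) (x, y)).comp
          (ContinuousLinearMap.inr ℝ (Eu p) (Eu q)) := by
    intro x y
    exact ((hgradyg x y).hasFDerivAt).unique (hFder x y)
  have hG1 : ContDiff ℝ 1 G := by
    have h1 : ContDiff ℝ 1 (fderiv ℝ (Function.uncurry g)) := hg.fderiv_right (by norm_num)
    have h2 : ContDiff ℝ 1 (fun pr : Eu p × Eu q =>
        (fderiv ℝ (Function.uncurry g) pr).comp (ContinuousLinearMap.inr ℝ (Eu p) (Eu q))) :=
      h1.clm_comp contDiff_const
    have h3 : G = fun pr : Eu p × Eu q => (InnerProductSpace.toDual ℝ (Eu q)).symm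
        ((fderiv ℝ (Function.uncurry g) pr).comp (ContinuousLinearMap.inr ℝ (Eu p) (Eu q))) := by
      funext pr
      rw [← hFeq pr.1 pr.2]
      simp [hGdef]
    rw [h3]
    exact ((InnerProductSpace.toDual ℝ (Eu q)).symm.toLinearIsometry
      |>.toContinuousLinearMap.contDiff).comp h2
  have hGd : HasFDerivAt G (fderiv ℝ G (x₀, y₀)) (x₀, y₀) :=
    (hG1.differentiable one_ne_zero (x₀, y₀)).hasFDerivAt
  set G' := fderiv ℝ G (x₀, y₀) with hG'def
  -- identify the partial derivatives of G
  have hAeq : G'.comp (ContinuousLinearMap.inl ℝ (Eu p) (Eu q)) = A := by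
    have hcomp : HasFDerivAt (fun x : Eu p => G (x, y₀))
        (G'.comp (ContinuousLinearMap.inl ℝ (Eu p) (Eu q))) x₀ :=
      hGd.comp (f := fun x : Eu p => ((x, y₀) : Eu p × Eu q)) x₀ (HasFDerivAt.prodMk (hasFDerivAt_id x₀) (hasFDerivAt_const y₀ x₀))
    exact hcomp.unique (hJg x₀ y₀)
  have hTeq : G'.comp (ContinuousLinearMap.inr ℝ (Eu p) (Eu q)) = T := by
    have hcomp : HasFDerivAt (fun y : Eu q => G (x₀, y))
        (G'.comp (ContinuousLinearMap.inr ℝ (Eu p) (Eu q))) y₀ :=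
      hGd.comp y₀ (HasFDerivAt.prodMk (hasFDerivAt_const x₀ y₀) (hasFDerivAt_id y₀))
    exact hcomp.unique (hHg x₀ y₀)
  have hG'app : ∀ z : Eu p × Eu q, G' z = A z.1 + T z.2 := by
    intro z
    have e1 := ContinuousLinearMap.ext_iff.mp hAeq z.1
    have e2 := ContinuousLinearMap.ext_iff.mp hTeq z.2
    simp only [ContinuousLinearMap.comp_apply, ContinuousLinearMap.inl_apply,
      ContinuousLinearMap.inr_apply] at e1 e2
    rw [← e1, ← e2, ← map_add]
    congr 1
    simp
  -- Lipschitz estimate for ystar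
  have hLpos : (0:ℝ) < L := lt_of_lt_of_le hμ hμL
  have hLipG : ∀ (x x' : Eu p) (y : Eu q), ‖gradyg x y - gradyg x' y‖ ≤ L * ‖x - x'‖ := by
    intro x x' y
    have h := hgradgLip x y x' y
    have h1 : ‖gradyg x y - gradyg x' y‖
        ≤ Real.sqrt (‖gradxg x y - gradxg x' y‖ ^ 2 + ‖gradyg x y - gradyg x' y‖ ^ 2) := by
      have hle : ‖gradyg x y - gradyg x' y‖ ^ 2
          ≤ ‖gradxg x y - gradxg x' y‖ ^ 2 + ‖gradyg x y - gradyg x' y‖ ^ 2 :=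
        le_add_of_nonneg_left (sq_nonneg _)
      have h' := Real.sqrt_le_sqrt hle
      rwa [Real.sqrt_sq (norm_nonneg _)] at h'
    have h2 : Real.sqrt (‖x - x'‖ ^ 2 + ‖y - y‖ ^ 2) = ‖x - x'‖ := by
      simp [Real.sqrt_sq, norm_nonneg]
    calc ‖gradyg x y - gradyg x' y‖
        ≤ Real.sqrt (‖gradxg x y - gradxg x' y‖ ^ 2 + ‖gradyg x y - gradyg x' y‖ ^ 2) := h1
      _ ≤ L * Real.sqrt (‖x - x'‖ ^ 2 + ‖y - y‖ ^ 2) := h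
      _ = L * ‖x - x'‖ := by rw [h2]
  have hLip : ∀ x, ‖ystar x - y₀‖ ≤ (L / μ) * ‖x - x₀‖ := by
    intro x
    have hm := hmono x (ystar x) y₀
    rw [hcrit x] at hm
    have hb : ⟪(0:Eu q) - gradyg x y₀, ystar x - y₀⟫ ≤ L * ‖x - x₀‖ * ‖ystar x - y₀‖ := by
      have hcs := real_inner_le_norm ((0:Eu q) - gradyg x y₀) (ystar x - y₀)
      have h0 : ‖(0:Eu q) - gradyg x y₀‖ = ‖gradyg x₀ y₀ - gradyg x y₀‖ := by
        rw [hcrit x₀]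
      have hL := hLipG x₀ x y₀
      rw [h0] at hcs
      have : ‖gradyg x₀ y₀ - gradyg x y₀‖ * ‖ystar x - y₀‖
          ≤ (L * ‖x₀ - x‖) * ‖ystar x - y₀‖ :=
        mul_le_mul_of_nonneg_right hL (norm_nonneg _)
      rw [norm_sub_rev x₀ x] at this
      linarith
    by_cases hz : ‖ystar x - y₀‖ = 0
    · rw [hz]; positivity
    · have hpos : 0 < ‖ystar x - y₀‖ := lt_of_le_of_ne (norm_nonneg _) (Ne.symm hz)
      rw [div_mul_eq_mul_div, le_div_iff₀ hμ]
      nlinarith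
  -- continuity of x ↦ (x, ystar x) at x₀
  have hmt : Filter.Tendsto (fun x => ((x, ystar x) : Eu p × Eu q)) (nhds x₀)
      (nhds (x₀, y₀)) := by
    refine Filter.Tendsto.prodMk_nhds Filter.tendsto_id ?_
    rw [tendsto_iff_norm_sub_tendsto_zero]
    have h0 : Filter.Tendsto (fun x : Eu p => (L / μ) * ‖x - x₀‖) (nhds x₀) (nhds 0) := by
      have h00 : Filter.Tendsto (fun x : Eu p => ‖x - x₀‖) (nhds x₀) (nhds 0) := by
        have hsub : Filter.Tendsto (fun x : Eu p => x - x₀) (nhds x₀) (nhds 0) := by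
          have h1 : Filter.Tendsto (fun x : Eu p => x) (nhds x₀) (nhds x₀) :=
            Filter.tendsto_id
          have h2 : Filter.Tendsto (fun _ : Eu p => x₀) (nhds x₀) (nhds x₀) :=
            tendsto_const_nhds
          simpa using h1.sub h2
        simpa using hsub.norm
      simpa using h00.const_mul (L / μ)
    exact squeeze_zero (fun x => norm_nonneg _) hLip h0
  -- invertibility of T
  have hTinj : Function.Injective T := hinj x₀ y₀
  have hTsurj : Function.Surjective T := by
    have hco : Function.Injective (T : Eu q →ₗ[ℝ] Eu q) := hTinj
    exact (LinearMap.injective_iff_surjective_of_finrank_eq_finrank rfl).mp hco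
  have hker : T.ker = ⊥ := by
    have : LinearMap.ker (T : Eu q →ₗ[ℝ] Eu q) = ⊥ := LinearMap.ker_eq_bot.mpr hTinj
    simpa using this
  have hrange : T.range = ⊤ := by
    have : LinearMap.range (T : Eu q →ₗ[ℝ] Eu q) = ⊤ := LinearMap.range_eq_top.mpr hTsurj
    simpa using this
  set Einv : Eu q →L[ℝ] Eu q :=
    (↑(ContinuousLinearEquiv.ofBijective T hker hrange).symm : Eu q →L[ℝ] Eu q) with hEinv
  have hET : ∀ k, Einv (T k) = k := by
    intro k
    exact ContinuousLinearEquiv.ofBijective_symm_apply_apply T _ _ k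
  have hTE : ∀ w, T (Einv w) = w := by
    intro w
    exact ContinuousLinearEquiv.ofBijective_apply_symm_apply T _ _ w
  set D : Eu p →L[ℝ] Eu q := -(Einv.comp A) with hDdef
  -- derivative of ystar at x₀
  have hDer : HasFDerivAt ystar D x₀ := by
    have h1 := hGd.isLittleO
    have h2 := h1.comp_tendsto hmt
    have h3 : (fun x => ((x, ystar x) : Eu p × Eu q) - (x₀, y₀)) =O[nhds x₀]
        (fun x => x - x₀) := by
      refine Asymptotics.IsBigO.of_bound (max 1 (L / μ)) ?_
      filter_upwards with x
      have hpn : ‖((x, ystar x) : Eu p × Eu q) - (x₀, y₀)‖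
          = max ‖x - x₀‖ ‖ystar x - y₀‖ := rfl
      rw [hpn]
      rw [max_le_iff]
      constructor
      · calc ‖x - x₀‖ = 1 * ‖x - x₀‖ := (one_mul _).symm
          _ ≤ max 1 (L / μ) * ‖x - x₀‖ :=
            mul_le_mul_of_nonneg_right (le_max_left _ _) (norm_nonneg _)
          _ ≤ max 1 (L / μ) * ‖x - x₀‖ := le_rfl
      · calc ‖ystar x - y₀‖ ≤ (L / μ) * ‖x - x₀‖ := hLip x
          _ ≤ max 1 (L / μ) * ‖x - x₀‖ :=
            mul_le_mul_of_nonneg_right (le_max_right _ _) (norm_nonneg _)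
      
    have h40 := h2.trans_isBigO h3
    have h4 : (fun x => -(A (x - x₀) + T (ystar x - y₀))) =o[nhds x₀]
        (fun x => x - x₀) := by
      refine h40.congr' (Filter.Eventually.of_forall fun x => ?_) Filter.EventuallyEq.rfl
      show G (x, ystar x) - G (x₀, y₀) - G' ((x, ystar x) - (x₀, y₀)) = _
      have hz1 : G (x, ystar x) = 0 := hcrit x
      have hz2 : G (x₀, y₀) = 0 := hcrit x₀
      have hG'z := hG'app (((x, ystar x) : Eu p × Eu q) - (x₀, y₀))
      rw [hz1, hz2, hG'z]
      simp
    have h6 : (fun x => Einv (-(A (x - x₀) + T (ystar x - y₀)))) =O[nhds x₀]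
        (fun x => -(A (x - x₀) + T (ystar x - y₀))) := by
      refine Asymptotics.IsBigO.of_bound ‖Einv‖ ?_
      filter_upwards with x
      exact Einv.le_opNorm _
    have h7 := h6.trans_isLittleO h4
    have h8 := h7.neg_left
    have h9 : (fun x => ystar x - ystar x₀ - D (x - x₀)) =o[nhds x₀]
        fun x => x - x₀ := by
      refine h8.congr' (Filter.Eventually.of_forall fun x => ?_) Filter.EventuallyEq.rfl
      show -Einv (-(A (x - x₀) + T (ystar x - y₀))) = ystar x - ystar x₀ - D (x - x₀)
      rw [map_neg, map_add, hET]
      simp only [hDdef, ContinuousLinearMap.neg_apply, ContinuousLinearMap.comp_apply]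
      abel
    exact .of_isLittleO h9
  -- full derivative of f
  have hfdiff : Differentiable ℝ (Function.uncurry f) := hf.differentiable (by norm_num)
  set F' := fderiv ℝ (Function.uncurry f) (x₀, y₀) with hF'def
  have hfd : HasFDerivAt (Function.uncurry f) F' (x₀, y₀) := (hfdiff (x₀, y₀)).hasFDerivAt
  have hfx : F'.comp (ContinuousLinearMap.inl ℝ (Eu p) (Eu q))
      = InnerProductSpace.toDual ℝ (Eu p) (gradxf x₀ y₀) := by
    have hcomp : HasFDerivAt (fun x : Eu p => Function.uncurry f (x, y₀))
        (F'.comp (ContinuousLinearMap.inl ℝ (Eu p) (Eu q))) x₀ :=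
      hfd.comp (f := fun x : Eu p => ((x, y₀) : Eu p × Eu q)) x₀ (HasFDerivAt.prodMk (hasFDerivAt_id x₀) (hasFDerivAt_const y₀ x₀))
    exact hcomp.unique (hgradxf x₀ y₀).hasFDerivAt
  have hfy : F'.comp (ContinuousLinearMap.inr ℝ (Eu p) (Eu q))
      = InnerProductSpace.toDual ℝ (Eu q) (gradyf x₀ y₀) := by
    have hcomp : HasFDerivAt (fun y : Eu q => Function.uncurry f (x₀, y))
        (F'.comp (ContinuousLinearMap.inr ℝ (Eu p) (Eu q))) y₀ :=
      hfd.comp y₀ (HasFDerivAt.prodMk (hasFDerivAt_const x₀ y₀) (hasFDerivAt_id y₀))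
    exact hcomp.unique (hgradyf x₀ y₀).hasFDerivAt
  have hF'app : ∀ z : Eu p × Eu q, F' z = ⟪gradxf x₀ y₀, z.1⟫ + ⟪gradyf x₀ y₀, z.2⟫ := by
    intro z
    have e1 := ContinuousLinearMap.ext_iff.mp hfx z.1
    have e2 := ContinuousLinearMap.ext_iff.mp hfy z.2
    simp only [ContinuousLinearMap.comp_apply, ContinuousLinearMap.inl_apply,
      ContinuousLinearMap.inr_apply, InnerProductSpace.toDual_apply_apply] at e1 e2
    rw [← e1, ← e2, ← map_add]
    congr 1
    simp
  -- symmetry of the Hessian T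
  have hsymm : ∀ u v : Eu q, ⟪T u, v⟫ = ⟪u, T v⟫ := by
    intro u v
    set td : Eu q →L[ℝ] (Eu q →L[ℝ] ℝ) :=
      (InnerProductSpace.toDual ℝ (Eu q)).toLinearIsometry.toContinuousLinearMap with htddef
    have hgrad' : ∀ y : Eu q, HasFDerivAt (fun y' => g x₀ y') (td (gradyg x₀ y)) y :=
      fun y => (hgradyg x₀ y).hasFDerivAt
    have hsnd : HasFDerivAt (fun y => td (gradyg x₀ y)) (td.comp T) y₀ :=
      td.hasFDerivAt.comp y₀ (hHg x₀ y₀)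
    have hkey := second_derivative_symmetric hgrad' hsnd u v
    have h1 : ⟪T u, v⟫ = ⟪T v, u⟫ := by
      have hk := hkey
      simp [htddef, InnerProductSpace.toDual_apply_apply] at hk
      exact hk
    rw [h1, real_inner_comm]
  -- assemble the chain rule
  have hm' : HasFDerivAt (fun x => ((x, ystar x) : Eu p × Eu q))
      ((ContinuousLinearMap.id ℝ (Eu p)).prod D) x₀ := (hasFDerivAt_id x₀).prodMk hDer
  have hΦ : HasFDerivAt (fun x => f x (ystar x))
      (F'.comp ((ContinuousLinearMap.id ℝ (Eu p)).prod D)) x₀ := hfd.comp (f := fun x => ((x, ystar x) : Eu p × Eu q)) x₀ hm'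
  have hfinal : F'.comp ((ContinuousLinearMap.id ℝ (Eu p)).prod D)
      = InnerProductSpace.toDual ℝ (Eu p) (gradxf x₀ y₀ - Jg x₀ y₀ (vstar x₀)) := by
    ext h
    have h1 := hF'app (h, D h)
    simp only [ContinuousLinearMap.comp_apply, ContinuousLinearMap.prod_apply,
      ContinuousLinearMap.coe_id', id_eq, InnerProductSpace.toDual_apply_apply]
    rw [h1]
    have h2 : ⟪gradyf x₀ y₀, D h⟫ = -⟪Jg x₀ y₀ (vstar x₀), h⟫ := by
      have hv : gradyf x₀ y₀ = T (vstar x₀) := (hvstar x₀).symm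
      rw [hv, hsymm]
      have hTDh : T (D h) = -(A h) := by
        simp only [hDdef, ContinuousLinearMap.neg_apply, ContinuousLinearMap.comp_apply,
          map_neg, hTE]
      rw [hTDh]
      rw [inner_neg_right, hAdef]
      rw [ContinuousLinearMap.adjoint_inner_right]
    rw [h2, inner_sub_left]
    ring
  rw [hasGradientAt_iff_hasFDerivAt, ← hfinal]
  exact hΦ
end
end

section
/- Fix x ∈ ℝ^p, a stepsize α > 0, an initialization y^0 ∈ ℝ^q not depending on x, and define the gradient-descent iterates y^t(x) = y^{t−1}(x) − α ∇_y g(x, y^{t−1}(x)) for t = 1, …, D. Then the map x ↦ f(x, y^D(x)) is differentiable and its total derivative satisfies ∂f(x, y^D(x))/∂x = ∇_x f(x, y^D) − α Σ_{t=0}^{D−1} ∇_x∇_y g(x, y^t) [ Π_{j=t+1}^{D−1} (I − α ∇²_y g(x, y^j)) ] ∇_y f(x, y^D), where the empty product Π_{j=D}^{D−1}(·) is the identity matrix. -/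
open scoped RealInnerProductSpace
open MeasureTheory ProbabilityTheory

set_option maxHeartbeats 1000000

noncomputable section

section Helpers

variable {E F G' : Type*} [NormedAddCommGroup E] [NormedSpace ℝ E]
  [NormedAddCommGroup F] [NormedSpace ℝ F] [NormedAddCommGroup G'] [NormedSpace ℝ G']

/-- If a function on a product is differentiable at a point and has partial derivatives `A`, `B`
there, then its total derivative is `A ∘ fst + B ∘ snd`. -/
theorem hasFDerivAt_of_partials {h : E × F → G'} {z : E × F} (hd : DifferentiableAt ℝ h z)
    {A : E →L[ℝ] G'} {B : F →L[ℝ] G'}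
    (hA : HasFDerivAt (fun a => h (a, z.2)) A z.1)
    (hB : HasFDerivAt (fun b => h (z.1, b)) B z.2) :
    HasFDerivAt h
      (A.comp (ContinuousLinearMap.fst ℝ E F) + B.comp (ContinuousLinearMap.snd ℝ E F)) z := by
  have hz : HasFDerivAt h (fderiv ℝ h z) z := hd.hasFDerivAt
  have h1 : HasFDerivAt (fun a => h (a, z.2))
      ((fderiv ℝ h z).comp (ContinuousLinearMap.inl ℝ E F)) z.1 :=
    hz.comp z.1 (hasFDerivAt_prodMk_left z.1 z.2)
  have h2 : HasFDerivAt (fun b => h (z.1, b))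
      ((fderiv ℝ h z).comp (ContinuousLinearMap.inr ℝ E F)) z.2 :=
    hz.comp z.2 (hasFDerivAt_prodMk_right z.1 z.2)
  have hA' : A = (fderiv ℝ h z).comp (ContinuousLinearMap.inl ℝ E F) := hA.unique h1
  have hB' : B = (fderiv ℝ h z).comp (ContinuousLinearMap.inr ℝ E F) := hB.unique h2
  have hEq : fderiv ℝ h z
      = A.comp (ContinuousLinearMap.fst ℝ E F) + B.comp (ContinuousLinearMap.snd ℝ E F) := by
    apply ContinuousLinearMap.ext
    intro u
    have hu : ContinuousLinearMap.inl ℝ E F u.1 + ContinuousLinearMap.inr ℝ E F u.2 = u := by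
      simp [Prod.ext_iff]
    calc fderiv ℝ h z u
        = fderiv ℝ h z (ContinuousLinearMap.inl ℝ E F u.1
            + ContinuousLinearMap.inr ℝ E F u.2) := by rw [hu]
      _ = fderiv ℝ h z (ContinuousLinearMap.inl ℝ E F u.1)
            + fderiv ℝ h z (ContinuousLinearMap.inr ℝ E F u.2) := map_add _ _ _
      _ = A u.1 + B u.2 := by rw [hA', hB']; rfl
      _ = (A.comp (ContinuousLinearMap.fst ℝ E F)
            + B.comp (ContinuousLinearMap.snd ℝ E F)) u := rfl
  rw [hEq] at hz
  exact hz

/-- Chain rule along the diagonal `x ↦ (x, k x)`. -/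
theorem hasFDerivAt_comp_diag {h : E × F → G'} {k : E → F} {x : E}
    {A : E →L[ℝ] G'} {B : F →L[ℝ] G'} {K : E →L[ℝ] F}
    (hh : HasFDerivAt h
      (A.comp (ContinuousLinearMap.fst ℝ E F) + B.comp (ContinuousLinearMap.snd ℝ E F)) (x, k x))
    (hk : HasFDerivAt k K x) :
    HasFDerivAt (fun x' => h (x', k x')) (A + B.comp K) x := by
  have h1 : HasFDerivAt (fun x' : E => (x', k x'))
      ((ContinuousLinearMap.id ℝ E).prod K) x := (hasFDerivAt_id x).prodMk hk
  have h2 := hh.comp x h1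
  have hEq : (A.comp (ContinuousLinearMap.fst ℝ E F)
      + B.comp (ContinuousLinearMap.snd ℝ E F)).comp ((ContinuousLinearMap.id ℝ E).prod K)
      = A + B.comp K := by
    ext u
    simp
  rw [hEq] at h2
  exact h2

end Helpers

/-- Proposition 2: explicit form of the ITD hypergradient estimate.  For the
gradient-descent iterates `y^t(x) = y^{t-1}(x) − α ∇_y g(x, y^{t-1}(x))` started from a fixed
`y^0`, the map `x ↦ f(x, y^D(x))` is differentiable with total derivative
`∇ₓ f(x,y^D) − α Σ_{t=0}^{D-1} ∇ₓ∇_y g(x,y^t) Π_{j=t+1}^{D-1}(I − α∇²_y g(x,y^j)) ∇_y f(x,y^D)`,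
where the empty product is the identity. -/
theorem itd_hypergradient_form {p q : ℕ}
    (f g : Eu p → Eu q → ℝ)
    (hf : ContDiff ℝ 2 (Function.uncurry f))
    (hg : ContDiff ℝ 2 (Function.uncurry g))
    (μ L M τ ρ : ℝ) (hμ : 0 < μ) (hμL : μ ≤ L)
    (gradxf gradxg : Eu p → Eu q → Eu p)
    (gradyf gradyg : Eu p → Eu q → Eu q)
    (hgradxf : ∀ x y, HasGradientAt (fun x' => f x' y) (gradxf x y) x)
    (hgradyf : ∀ x y, HasGradientAt (fun y' => f x y') (gradyf x y) y)
    (hgradxg : ∀ x y, HasGradientAt (fun x' => g x' y) (gradxg x y) x)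
    (hgradyg : ∀ x y, HasGradientAt (fun y' => g x y') (gradyg x y) y)
    (Hg : Eu p → Eu q → (Eu q →L[ℝ] Eu q))
    (Jg : Eu p → Eu q → (Eu q →L[ℝ] Eu p))
    (hHg : ∀ x y, HasFDerivAt (fun y' => gradyg x y') (Hg x y) y)
    (hJg : ∀ x y, HasFDerivAt (fun x' => gradyg x' y) (ContinuousLinearMap.adjoint (Jg x y)) x)
    (hsc : ∀ x, StrongConvexOn Set.univ μ (g x))
    (hfLip : ∀ x y x' y', |f x y - f x' y'| ≤ M * Real.sqrt (‖x - x'‖ ^ 2 + ‖y - y'‖ ^ 2))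
    (hgradfLip : ∀ x y x' y',
      Real.sqrt (‖gradxf x y - gradxf x' y'‖ ^ 2 + ‖gradyf x y - gradyf x' y'‖ ^ 2)
        ≤ L * Real.sqrt (‖x - x'‖ ^ 2 + ‖y - y'‖ ^ 2))
    (hgradgLip : ∀ x y x' y',
      Real.sqrt (‖gradxg x y - gradxg x' y'‖ ^ 2 + ‖gradyg x y - gradyg x' y'‖ ^ 2)
        ≤ L * Real.sqrt (‖x - x'‖ ^ 2 + ‖y - y'‖ ^ 2))
    (hJgLip : ∀ x y x' y', ‖Jg x y - Jg x' y'‖ ≤ τ * Real.sqrt (‖x - x'‖ ^ 2 + ‖y - y'‖ ^ 2))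
    (hHgLip : ∀ x y x' y', ‖Hg x y - Hg x' y'‖ ≤ ρ * Real.sqrt (‖x - x'‖ ^ 2 + ‖y - y'‖ ^ 2))
    (ystar : Eu p → Eu q)
    (hystar : ∀ x, IsMinOn (g x) Set.univ (ystar x))
    (α : ℝ) (hα : 0 < α) (hαL : α ≤ 1 / L) (D : ℕ)
    (y0 : Eu q)
    (ytraj : ℕ → Eu p → Eu q)
    (hytraj0 : ∀ x', ytraj 0 x' = y0)
    (hytrajS : ∀ t x', ytraj (t + 1) x' = ytraj t x' - α • gradyg x' (ytraj t x'))
    (x : Eu p) :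
    HasGradientAt (fun x' => f x' (ytraj D x'))
      (gradxf x (ytraj D x) -
        α • ∑ t ∈ Finset.range D,
          Jg x (ytraj t x)
            ((((List.range' (t + 1) (D - 1 - t)).map
                (fun j => (1 : Eu q →L[ℝ] Eu q) - α • Hg x (ytraj j x))).prod)
              (gradyf x (ytraj D x)))) x := by
  classical
  have hf1 : Differentiable ℝ (Function.uncurry f) := hf.differentiable two_ne_zero
  have hg1 : Differentiable ℝ (Function.uncurry g) := hg.differentiable two_ne_zero
  -- `gradyg` is jointly differentiable (as the partial gradient of the `C²` function `g`).
  have hGdual : ∀ z : Eu p × Eu q,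
      (InnerProductSpace.toDual ℝ (Eu q) (gradyg z.1 z.2) : Eu q →L[ℝ] ℝ)
        = (fderiv ℝ (Function.uncurry g) z).comp (ContinuousLinearMap.inr ℝ (Eu p) (Eu q)) := by
    intro z
    have h1 : HasFDerivAt (fun y' => g z.1 y')
        (InnerProductSpace.toDual ℝ (Eu q) (gradyg z.1 z.2)) z.2 :=
      (hgradyg z.1 z.2).hasFDerivAt
    have h2 : HasFDerivAt (fun y' => g z.1 y')
        ((fderiv ℝ (Function.uncurry g) z).comp (ContinuousLinearMap.inr ℝ (Eu p) (Eu q))) z.2 :=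
      by have h := (hg1 _).hasFDerivAt.comp z.2 (hasFDerivAt_prodMk_right z.1 z.2); exact h
    exact h1.unique h2
  have hGdiff : Differentiable ℝ (fun z : Eu p × Eu q => gradyg z.1 z.2) := by
    have hd2 : Differentiable ℝ (fderiv ℝ (Function.uncurry g)) :=
      (hg.fderiv_right (m := 1) (by norm_num)).differentiable one_ne_zero
    have hrw : (fun z : Eu p × Eu q => gradyg z.1 z.2)
        = fun z => (InnerProductSpace.toDual ℝ (Eu q)).symm
            (((ContinuousLinearMap.compL ℝ (Eu q) (Eu p × Eu q) ℝ).flip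
              (ContinuousLinearMap.inr ℝ (Eu p) (Eu q))) (fderiv ℝ (Function.uncurry g) z)) := by
      funext z
      have : ((ContinuousLinearMap.compL ℝ (Eu q) (Eu p × Eu q) ℝ).flip
            (ContinuousLinearMap.inr ℝ (Eu p) (Eu q))) (fderiv ℝ (Function.uncurry g) z)
          = (fderiv ℝ (Function.uncurry g) z).comp (ContinuousLinearMap.inr ℝ (Eu p) (Eu q)) := rfl
      rw [this, ← hGdual z, LinearIsometryEquiv.symm_apply_apply]
    rw [hrw]
    exact (InnerProductSpace.toDual ℝ (Eu q)).symm.differentiable.comp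
      ((((ContinuousLinearMap.compL ℝ (Eu q) (Eu p × Eu q) ℝ).flip
        (ContinuousLinearMap.inr ℝ (Eu p) (Eu q))).differentiable).comp hd2)
  -- full derivative of `gradyg` from the partials
  have hGfull : ∀ (a : Eu p) (b : Eu q),
      HasFDerivAt (fun z : Eu p × Eu q => gradyg z.1 z.2)
        ((ContinuousLinearMap.adjoint (Jg a b)).comp (ContinuousLinearMap.fst ℝ (Eu p) (Eu q))
          + (Hg a b).comp (ContinuousLinearMap.snd ℝ (Eu p) (Eu q))) (a, b) := by
    intro a b
    exact hasFDerivAt_of_partials (hGdiff (a, b)) (hJg a b) (hHg a b)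
  -- the tangent operators of the trajectory
  set C : ℕ → (Eu q →L[ℝ] Eu q) :=
    fun t => (1 : Eu q →L[ℝ] Eu q) - α • Hg x (ytraj t x) with hC
  set Jt : ℕ → (Eu p →L[ℝ] Eu q) := fun n => Nat.rec 0
    (fun t J => (C t).comp J - α • ContinuousLinearMap.adjoint (Jg x (ytraj t x))) n with hJt
  have hJt0 : Jt 0 = 0 := rfl
  have hJtS : ∀ t, Jt (t + 1)
      = (C t).comp (Jt t) - α • ContinuousLinearMap.adjoint (Jg x (ytraj t x)) := fun t => rfl
  have hyd : ∀ t, HasFDerivAt (ytraj t) (Jt t) x := by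
    intro t
    induction t with
    | zero =>
      have h0 : ytraj 0 = fun _ => y0 := funext hytraj0
      rw [h0, hJt0]
      exact hasFDerivAt_const y0 x
    | succ t ih =>
      have heq : ytraj (t + 1) = fun x' => ytraj t x' - α • gradyg x' (ytraj t x') :=
        funext (hytrajS t)
      rw [heq]
      have hGc : HasFDerivAt (fun x' => gradyg x' (ytraj t x'))
          (ContinuousLinearMap.adjoint (Jg x (ytraj t x)) + (Hg x (ytraj t x)).comp (Jt t)) x :=
        hasFDerivAt_comp_diag (hGfull x (ytraj t x)) ih
      have hsub := ih.sub (hGc.const_smul α)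
      have hEq : Jt t - α • (ContinuousLinearMap.adjoint (Jg x (ytraj t x))
            + (Hg x (ytraj t x)).comp (Jt t)) = Jt (t + 1) := by
        rw [hJtS t]
        refine ContinuousLinearMap.ext fun u => ?_
        simp only [hC, ContinuousLinearMap.sub_apply, ContinuousLinearMap.smul_apply,
          ContinuousLinearMap.add_apply, ContinuousLinearMap.coe_comp', Function.comp_apply,
          ContinuousLinearMap.one_apply, smul_add]
        abel
      rw [hEq] at hsub
      exact hsub
  -- the Hessian `Hg x b` is self-adjoint
  have hHsymm : ∀ b : Eu q, ∀ v w : Eu q, ⟪(Hg x b) v, w⟫ = ⟪v, (Hg x b) w⟫ := by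
    intro b v w
    set T : Eu q →L[ℝ] (Eu q →L[ℝ] ℝ) :=
      (InnerProductSpace.toDual ℝ (Eu q)).toLinearIsometry.toContinuousLinearMap with hT
    have hf' : ∀ y' : Eu q, HasFDerivAt (fun y'' => g x y'')
        ((fun y'' => T (gradyg x y'')) y') y' := fun y' => (hgradyg x y').hasFDerivAt
    have hx2 : HasFDerivAt (fun y'' => T (gradyg x y'')) (T.comp (Hg x b)) b :=
      T.hasFDerivAt.comp b (hHg x b)
    have hsym := second_derivative_symmetric hf' hx2 v w
    have h1 : ⟪(Hg x b) v, w⟫ = ⟪(Hg x b) w, v⟫ := hsym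
    rw [h1, real_inner_comm]
  have hHadj : ∀ b : Eu q, ContinuousLinearMap.adjoint (Hg x b) = Hg x b := by
    intro b
    exact ((ContinuousLinearMap.eq_adjoint_iff (Hg x b) (Hg x b)).mpr (hHsymm b)).symm
  have hCadj : ∀ t, ContinuousLinearMap.adjoint (C t) = C t := by
    intro t
    refine ((ContinuousLinearMap.eq_adjoint_iff (C t) (C t)).mpr ?_).symm
    intro v w
    simp only [hC, ContinuousLinearMap.sub_apply, ContinuousLinearMap.smul_apply,
      ContinuousLinearMap.one_apply, inner_sub_left, inner_sub_right,
      real_inner_smul_left, real_inner_smul_right]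
    rw [hHsymm (ytraj t x) v w]
  -- closed form for the adjoint of the tangent operator, applied to a fixed vector
  have hadj : ∀ (w : Eu q) (n : ℕ), ContinuousLinearMap.adjoint (Jt n) w
      = -(α • ∑ t ∈ Finset.range n, Jg x (ytraj t x)
          ((((List.range' (t + 1) (n - 1 - t)).map C).prod) w)) := by
    intro w n
    induction n generalizing w with
    | zero =>
      rw [hJt0]
      simp
    | succ n ih =>
      rw [hJtS n]
      have hstep : ContinuousLinearMap.adjoint
          ((C n).comp (Jt n) - α • ContinuousLinearMap.adjoint (Jg x (ytraj n x)))
          = (ContinuousLinearMap.adjoint (Jt n)).comp (C n) - α • Jg x (ytraj n x) := by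
        rw [map_sub, ContinuousLinearMap.adjoint_comp, hCadj n]
        congr 1
        rw [map_smulₛₗ]
        simp [ContinuousLinearMap.adjoint_adjoint]
      rw [hstep]
      have happ : ((ContinuousLinearMap.adjoint (Jt n)).comp (C n)
            - α • Jg x (ytraj n x)) w
          = ContinuousLinearMap.adjoint (Jt n) ((C n) w) - α • Jg x (ytraj n x) w := rfl
      rw [happ, ih ((C n) w)]
      rw [Finset.sum_range_succ]
      have hlast : (((List.range' (n + 1) (n + 1 - 1 - n)).map C).prod) w = w := by
        have : n + 1 - 1 - n = 0 := by omega
        rw [this]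
        simp
      have hterm : ∀ t ∈ Finset.range n,
          Jg x (ytraj t x) ((((List.range' (t + 1) (n - 1 - t)).map C).prod) ((C n) w))
            = Jg x (ytraj t x) ((((List.range' (t + 1) (n + 1 - 1 - t)).map C).prod) w) := by
        intro t ht
        have htn : t < n := Finset.mem_range.mp ht
        have hlen : n + 1 - 1 - t = (n - 1 - t) + 1 := by omega
        have hconcat : List.range' (t + 1) ((n - 1 - t) + 1)
            = List.range' (t + 1) (n - 1 - t) ++ [n] := by
          rw [List.range'_concat]
          congr 2
          omega
        rw [hlen, hconcat]
        simp only [List.map_append, List.prod_append, List.map_cons, List.map_nil,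
          List.prod_cons, List.prod_nil, mul_one]
        rfl
      rw [Finset.sum_congr rfl hterm, hlast]
      rw [smul_add, neg_add]
      abel
  -- identify the partial derivatives of `f`
  set yD := ytraj D x with hyD
  have hfx : (fderiv ℝ (Function.uncurry f) (x, yD)).comp
        (ContinuousLinearMap.inl ℝ (Eu p) (Eu q))
      = InnerProductSpace.toDual ℝ (Eu p) (gradxf x yD) := by
    have h1 : HasFDerivAt (fun x' => f x' yD)
        (InnerProductSpace.toDual ℝ (Eu p) (gradxf x yD)) x := (hgradxf x yD).hasFDerivAt
    have h2 : HasFDerivAt (fun x' => f x' yD)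
        ((fderiv ℝ (Function.uncurry f) (x, yD)).comp
          (ContinuousLinearMap.inl ℝ (Eu p) (Eu q))) x :=
      by have h := (hf1 _).hasFDerivAt.comp x (hasFDerivAt_prodMk_left x yD); exact h
    exact h2.unique h1
  have hfy : (fderiv ℝ (Function.uncurry f) (x, yD)).comp
        (ContinuousLinearMap.inr ℝ (Eu p) (Eu q))
      = InnerProductSpace.toDual ℝ (Eu q) (gradyf x yD) := by
    have h1 : HasFDerivAt (fun y' => f x y')
        (InnerProductSpace.toDual ℝ (Eu q) (gradyf x yD)) yD := (hgradyf x yD).hasFDerivAt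
    have h2 : HasFDerivAt (fun y' => f x y')
        ((fderiv ℝ (Function.uncurry f) (x, yD)).comp
          (ContinuousLinearMap.inr ℝ (Eu p) (Eu q))) yD :=
      by have h := (hf1 (x, yD)).hasFDerivAt.comp yD (hasFDerivAt_prodMk_right x yD); exact h
    exact h2.unique h1
  -- the composite derivative
  have hcomp : HasFDerivAt (fun x' => f x' (ytraj D x'))
      ((fderiv ℝ (Function.uncurry f) (x, yD)).comp
        ((ContinuousLinearMap.id ℝ (Eu p)).prod (Jt D))) x := by
    have h1 : HasFDerivAt (fun x' : Eu p => (x', ytraj D x'))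
        ((ContinuousLinearMap.id ℝ (Eu p)).prod (Jt D)) x := (hasFDerivAt_id x).prodMk (hyd D)
    exact (hf1 (x, yD)).hasFDerivAt.comp x h1
  -- identify the target gradient
  rw [hasGradientAt_iff_hasFDerivAt]
  have hVec : gradxf x yD
        - α • ∑ t ∈ Finset.range D, Jg x (ytraj t x)
            ((((List.range' (t + 1) (D - 1 - t)).map
              (fun j => (1 : Eu q →L[ℝ] Eu q) - α • Hg x (ytraj j x))).prod) (gradyf x yD))
      = gradxf x yD + ContinuousLinearMap.adjoint (Jt D) (gradyf x yD) := by
    rw [hadj (gradyf x yD) D, sub_eq_add_neg]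
  rw [hVec]
  have hEq : (InnerProductSpace.toDual ℝ (Eu p)
        (gradxf x yD + ContinuousLinearMap.adjoint (Jt D) (gradyf x yD)) : Eu p →L[ℝ] ℝ)
      = (fderiv ℝ (Function.uncurry f) (x, yD)).comp
          ((ContinuousLinearMap.id ℝ (Eu p)).prod (Jt D)) := by
    apply ContinuousLinearMap.ext
    intro u
    have hsplit : ((ContinuousLinearMap.id ℝ (Eu p)).prod (Jt D)) u
        = ContinuousLinearMap.inl ℝ (Eu p) (Eu q) u
          + ContinuousLinearMap.inr ℝ (Eu p) (Eu q) (Jt D u) := by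
      simp [Prod.ext_iff]
    calc (InnerProductSpace.toDual ℝ (Eu p)
          (gradxf x yD + ContinuousLinearMap.adjoint (Jt D) (gradyf x yD))) u
        = ⟪gradxf x yD, u⟫ + ⟪ContinuousLinearMap.adjoint (Jt D) (gradyf x yD), u⟫ := by
          rw [InnerProductSpace.toDual_apply_apply, inner_add_left]
      _ = ⟪gradxf x yD, u⟫ + ⟪gradyf x yD, Jt D u⟫ := by
          rw [ContinuousLinearMap.adjoint_inner_left]
      _ = (fderiv ℝ (Function.uncurry f) (x, yD))
            (ContinuousLinearMap.inl ℝ (Eu p) (Eu q) u)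
          + (fderiv ℝ (Function.uncurry f) (x, yD))
            (ContinuousLinearMap.inr ℝ (Eu p) (Eu q) (Jt D u)) := by
          rw [← InnerProductSpace.toDual_apply_apply, ← InnerProductSpace.toDual_apply_apply,
            ← hfx, ← hfy]
          rfl
      _ = (fderiv ℝ (Function.uncurry f) (x, yD))
            (((ContinuousLinearMap.id ℝ (Eu p)).prod (Jt D)) u) := by
          rw [hsplit, map_add]
      _ = ((fderiv ℝ (Function.uncurry f) (x, yD)).comp
            ((ContinuousLinearMap.id ℝ (Eu p)).prod (Jt D))) u := rfl
  rw [hEq]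
  exact hcomp
end
end

section
/- Under the stated assumptions, the gradient of the total objective Φ(x) = f(x, y*(x)) is L_Φ-Lipschitz: for all x, x′ ∈ ℝ^p, ‖∇Φ(x) − ∇Φ(x′)‖ ≤ L_Φ ‖x − x′‖, where L_Φ = L + (2L² + τM²)/μ + (ρLM + L³ + τML)/μ² + ρL²M/μ³. -/
open scoped RealInnerProductSpace
open MeasureTheory ProbabilityTheory

open Filter Topology Set Function ContinuousLinearMap

noncomputable section

/-- derivative at 0 bounded by a Lipschitz-type bound at 0. -/
lemma abs_deriv_le_of_lip {h : ℝ → ℝ} {D C : ℝ} (hD : HasDerivAt h D 0)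
    (hlip : ∀ t : ℝ, |h t - h 0| ≤ C * |t|) : |D| ≤ C := by
  have hs := hasDerivAt_iff_tendsto_slope.1 hD
  have habs : Tendsto (fun t => |slope h 0 t|) (𝓝[≠] (0:ℝ)) (𝓝 |D|) :=
    (continuous_abs.continuousAt).tendsto.comp hs
  refine le_of_tendsto habs ?_
  filter_upwards [self_mem_nhdsWithin] with t ht
  have ht' : t ≠ 0 := ht
  have hsl : slope h 0 t = (h t - h 0) / t := by simp [slope_def_field]
  rw [hsl, abs_div]
  rw [div_le_iff₀ (abs_pos.2 ht')]
  exact hlip t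

lemma cs2 {a b c d : ℝ} (ha : 0 ≤ a) (hb : 0 ≤ b) (hc : 0 ≤ c) (hd : 0 ≤ d) :
    a * c + b * d ≤ Real.sqrt (a ^ 2 + b ^ 2) * Real.sqrt (c ^ 2 + d ^ 2) := by
  have h1 : (a * c + b * d) ^ 2 ≤ (a ^ 2 + b ^ 2) * (c ^ 2 + d ^ 2) := by
    nlinarith [sq_nonneg (a * d - b * c)]
  have h2 : a * c + b * d = Real.sqrt ((a * c + b * d) ^ 2) := by
    rw [Real.sqrt_sq (by positivity)]
  rw [h2, ← Real.sqrt_mul (by positivity)]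
  exact Real.sqrt_le_sqrt h1

lemma sqrt_sq_add_sq_le {a b : ℝ} (ha : 0 ≤ a) (hb : 0 ≤ b) :
    Real.sqrt (a ^ 2 + b ^ 2) ≤ a + b := by
  rw [show a + b = Real.sqrt ((a+b)^2) by rw [Real.sqrt_sq (by positivity)]]
  apply Real.sqrt_le_sqrt; nlinarith

lemma le_sqrt_sq_add_sq_left (a b : ℝ) : a ≤ Real.sqrt (a ^ 2 + b ^ 2) := by
  calc a ≤ |a| := le_abs_self a
  _ = Real.sqrt (a^2) := by rw [Real.sqrt_sq_eq_abs]
  _ ≤ _ := Real.sqrt_le_sqrt (by nlinarith [sq_nonneg b])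

lemma le_sqrt_sq_add_sq_right (a b : ℝ) : b ≤ Real.sqrt (a ^ 2 + b ^ 2) := by
  rw [add_comm]; exact le_sqrt_sq_add_sq_left b a

/-- the quadratic-form argument: if `|s²a + 2sj + h| ≤ L(s²+1)` for all `s`, and `μ ≤ h`,
`0 < μ`, then `j² ≤ L² - μ²`. -/
lemma quad_ineq {a j h L μ : ℝ} (hμ : 0 < μ) (hh : μ ≤ h)
    (hq : ∀ s : ℝ, |s ^ 2 * a + 2 * s * j + h| ≤ L * (s ^ 2 + 1)) :
    j ^ 2 ≤ L ^ 2 - μ ^ 2 := by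
  have hhL : h ≤ L := by have := hq 0; simp at this; linarith [abs_le.1 this |>.2]
  have h1 : discrim (L - a) (-(2*j)) (L - h) ≤ 0 := by
    apply discrim_le_zero
    intro s
    have := (abs_le.1 (hq s)).2
    nlinarith
  have h2 : discrim (L + a) (2*j) (L + h) ≤ 0 := by
    apply discrim_le_zero
    intro s
    have := (abs_le.1 (hq s)).1
    nlinarith
  rw [discrim] at h1 h2
  rcases le_or_gt 0 (a + h) with hc | hc
  · nlinarith [mul_nonneg (sub_nonneg.2 hhL) hc]
  · nlinarith [mul_nonneg (sub_nonneg.2 hhL) (le_of_lt (neg_pos.2 hc))]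





section SC

variable {q : ℕ} {μ : ℝ} {G : Eu q → ℝ} {Gg : Eu q → Eu q}

/-- gradient inequality for strongly convex functions -/
lemma grad_lower (hμ : 0 < μ) (hsc : StrongConvexOn Set.univ μ G)
    (hGg : ∀ y, HasGradientAt G (Gg y) y) (y z : Eu q) :
    ⟪Gg z, y - z⟫ ≤ G y - G z - μ / 2 * ‖y - z‖ ^ 2 := by
  have hline : HasDerivAt (fun t : ℝ => z + t • (y - z)) (y - z) 0 := by
    simpa using ((hasDerivAt_id (0:ℝ)).smul_const (y - z)).const_add z
  have hd : HasDerivAt (fun t : ℝ => G (z + t • (y - z))) ⟪Gg z, y - z⟫ 0 := by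
    have h1 : HasFDerivAt G ((InnerProductSpace.toDual ℝ (Eu q)) (Gg z))
        ((fun t : ℝ => z + t • (y - z)) 0) := by
      simp only [zero_smul, add_zero]
      exact (hGg z).hasFDerivAt
    simpa [InnerProductSpace.toDual_apply_apply, Function.comp_def] using h1.comp_hasDerivAt 0 hline
  have hcomb : ∀ t : ℝ, z + t • (y - z) = t • y + (1 - t) • z := by
    intro t; rw [smul_sub, sub_smul, one_smul]; abel
  have hslope : ∀ t ∈ Ioc (0:ℝ) 1,
      slope (fun t : ℝ => G (z + t • (y - z))) 0 t
        ≤ G y - G z - (1 - t) * (μ / 2 * ‖y - z‖ ^ 2) := by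
    intro t ht
    have h1' := (hsc.2) (mem_univ y) (mem_univ z) (a := t) (b := 1 - t)
      (le_of_lt ht.1) (by linarith [ht.2]) (by ring)
    simp only [smul_eq_mul] at h1'
    rw [slope_def_field]
    have h0 : (fun t : ℝ => G (z + t • (y - z))) 0 = G z := by simp
    simp only [h0, sub_zero]
    rw [div_le_iff₀ ht.1, hcomb t]
    nlinarith [h1']
  have htend : Tendsto (slope (fun t : ℝ => G (z + t • (y - z))) 0) (𝓝[>] (0:ℝ))
      (𝓝 ⟪Gg z, y - z⟫) :=
    (hasDerivAt_iff_tendsto_slope.1 hd).mono_left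
      (nhdsWithin_mono _ (fun t ht => ne_of_gt ht))
  have htend2 : Tendsto (fun t : ℝ => G y - G z - (1 - t) * (μ / 2 * ‖y - z‖ ^ 2))
      (𝓝[>] (0:ℝ)) (𝓝 (G y - G z - μ / 2 * ‖y - z‖ ^ 2)) := by
    have h3 : Tendsto (fun t : ℝ => G y - G z - (1 - t) * (μ / 2 * ‖y - z‖ ^ 2)) (𝓝 (0:ℝ))
        (𝓝 (G y - G z - (1 - 0) * (μ / 2 * ‖y - z‖ ^ 2))) :=
      tendsto_const_nhds.sub ((tendsto_const_nhds.sub tendsto_id).mul tendsto_const_nhds)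
    have h4 : G y - G z - (1 - 0) * (μ / 2 * ‖y - z‖ ^ 2) = G y - G z - μ / 2 * ‖y - z‖ ^ 2 := by
      ring
    rw [h4] at h3
    exact h3.mono_left nhdsWithin_le_nhds
  refine le_of_tendsto_of_tendsto htend htend2 ?_
  filter_upwards [Ioc_mem_nhdsGT_of_mem (by constructor <;> norm_num : (0:ℝ) ∈ Ico (0:ℝ) 1)]
    with t ht
  exact hslope t ht

/-- monotonicity of the gradient of a strongly convex function -/
lemma grad_mono (hμ : 0 < μ) (hsc : StrongConvexOn Set.univ μ G)
    (hGg : ∀ y, HasGradientAt G (Gg y) y) (y z : Eu q) :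
    μ * ‖y - z‖ ^ 2 ≤ ⟪Gg y - Gg z, y - z⟫ := by
  have h1 := grad_lower hμ hsc hGg y z
  have h2 := grad_lower hμ hsc hGg z y
  have h3 : ⟪Gg y, z - y⟫ = -⟪Gg y, y - z⟫ := by
    rw [show z - y = -(y - z) by abel, inner_neg_right]
  rw [h3] at h2
  have h4 : ‖z - y‖ = ‖y - z‖ := norm_sub_rev z y
  rw [h4] at h2
  rw [inner_sub_left]
  nlinarith [h1, h2]

end SC


section SC
variable {q : ℕ} {μ : ℝ} {G : Eu q → ℝ} {Gg : Eu q → Eu q}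

lemma grad_mono' (hmono : ∀ y z : Eu q, μ * ‖y - z‖ ^ 2 ≤ ⟪Gg y - Gg z, y - z⟫)
    {H : Eu q →L[ℝ] Eu q} {y : Eu q} (hH : HasFDerivAt Gg H y) (v : Eu q) :
    μ * ‖v‖ ^ 2 ≤ ⟪H v, v⟫ := by
  have hline : HasDerivAt (fun t : ℝ => y + t • v) v 0 := by
    simpa using ((hasDerivAt_id (0:ℝ)).smul_const v).const_add y
  have hd : HasDerivAt (fun t : ℝ => Gg (y + t • v)) (H v) 0 := by
    have h1 : HasFDerivAt Gg H ((fun t : ℝ => y + t • v) 0) := by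
      simp only [zero_smul, add_zero]; exact hH
    exact h1.comp_hasDerivAt 0 hline
  have hs := hasDerivAt_iff_tendsto_slope.1 hd
  have hinner : Tendsto (fun t : ℝ => ⟪slope (fun t : ℝ => Gg (y + t • v)) 0 t, v⟫)
      (𝓝[≠] (0:ℝ)) (𝓝 ⟪H v, v⟫) := hs.inner tendsto_const_nhds
  refine ge_of_tendsto hinner ?_
  filter_upwards [self_mem_nhdsWithin] with t ht
  have ht' : (t:ℝ) ≠ 0 := ht
  have hm := hmono (y + t • v) y
  have e1 : y + t • v - y = t • v := by abel
  rw [e1] at hm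
  have e2 : ‖t • v‖ ^ 2 = t ^ 2 * ‖v‖ ^ 2 := by
    rw [norm_smul]; simp [mul_pow]
  rw [e2, real_inner_smul_right] at hm
  have e3 : slope (fun t : ℝ => Gg (y + t • v)) 0 t
      = t⁻¹ • (Gg (y + t • v) - Gg y) := by
    rw [slope]; simp [vsub_eq_sub]
  rw [e3, real_inner_smul_left]
  have h4 : (0:ℝ) ≤ (t⁻¹) ^ 2 := sq_nonneg _
  have h5 := mul_le_mul_of_nonneg_left hm h4
  have e6 : t⁻¹ ^ 2 * (μ * (t ^ 2 * ‖v‖ ^ 2)) = μ * ‖v‖ ^ 2 := by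
    field_simp
  have e7 : t⁻¹ ^ 2 * (t * ⟪Gg (y + t • v) - Gg y, v⟫)
      = t⁻¹ * ⟪Gg (y + t • v) - Gg y, v⟫ := by
    field_simp
  rw [e6, e7] at h5
  exact h5

lemma min_grad_zero {y : Eu q} {gy : Eu q} (hmin : IsMinOn G Set.univ y)
    (hGg : HasGradientAt G gy y) : gy = 0 := by
  have h1 : IsLocalMin G y := hmin.isLocalMin (by simp)
  have h2 := h1.hasFDerivAt_eq_zero hGg.hasFDerivAt
  have h3 : (InnerProductSpace.toDual ℝ (Eu q)) gy = 0 := h2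
  simpa using congrArg (fun L => (InnerProductSpace.toDual ℝ (Eu q)).symm L) h3

end SC



section FD
variable {p q : ℕ}

lemma fderiv_uncurry_eq {F : Eu p → Eu q → ℝ}
    (hF : ContDiff ℝ 2 (Function.uncurry F)) {x : Eu p} {y : Eu q}
    {gx : Eu p} {gy : Eu q}
    (hgx : HasGradientAt (fun x' => F x' y) gx x)
    (hgy : HasGradientAt (fun y' => F x y') gy y) (u : Eu p) (v : Eu q) :
    fderiv ℝ (Function.uncurry F) (x, y) (u, v) = ⟪gx, u⟫ + ⟪gy, v⟫ := by
  have hD : HasFDerivAt (Function.uncurry F) (fderiv ℝ (Function.uncurry F) (x, y)) (x, y) :=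
    ((hF.differentiable (by norm_num)) (x, y)).hasFDerivAt
  have h1 : HasFDerivAt (fun x' => F x' y)
      ((fderiv ℝ (Function.uncurry F) (x, y)).comp (ContinuousLinearMap.inl ℝ (Eu p) (Eu q))) x :=
    by have h := hD.comp x (hasFDerivAt_prodMk_left (𝕜 := ℝ) x y); exact h
  have h2 : HasFDerivAt (fun y' => F x y')
      ((fderiv ℝ (Function.uncurry F) (x, y)).comp (ContinuousLinearMap.inr ℝ (Eu p) (Eu q))) y :=
    hD.comp y (hasFDerivAt_prodMk_right x y)
  have e1 := hgx.hasFDerivAt.unique h1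
  have e2 := hgy.hasFDerivAt.unique h2
  have hsplit : ((u, v) : Eu p × Eu q) = (u, 0) + (0, v) := by simp
  rw [hsplit, map_add]
  have t1 : fderiv ℝ (Function.uncurry F) (x, y) (u, 0) = ⟪gx, u⟫ := by
    have := congrFun (congrArg DFunLike.coe e1) u
    simpa [InnerProductSpace.toDual_apply_apply] using this.symm
  have t2 : fderiv ℝ (Function.uncurry F) (x, y) (0, v) = ⟪gy, v⟫ := by
    have := congrFun (congrArg DFunLike.coe e2) v
    simpa [InnerProductSpace.toDual_apply_apply] using this.symm
  rw [t1, t2]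

end FD



section FD
variable {p q : ℕ} {g : Eu p → Eu q → ℝ}
  {gradxg : Eu p → Eu q → Eu p} {gradyg : Eu p → Eu q → Eu q}
  {Hg : Eu p → Eu q → (Eu q →L[ℝ] Eu q)} {Jg : Eu p → Eu q → (Eu q →L[ℝ] Eu p)}

lemma Bfacts (hg : ContDiff ℝ 2 (Function.uncurry g))
    (hgradxg : ∀ x y, HasGradientAt (fun x' => g x' y) (gradxg x y) x)
    (hgradyg : ∀ x y, HasGradientAt (fun y' => g x y') (gradyg x y) y)
    (hHg : ∀ x y, HasFDerivAt (fun y' => gradyg x y') (Hg x y) y)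
    (hJg : ∀ x y, HasFDerivAt (fun x' => gradyg x' y)
      (ContinuousLinearMap.adjoint (Jg x y)) x)
    (x : Eu p) (y : Eu q) :
    (∀ v w : Eu q, fderiv ℝ (fderiv ℝ (Function.uncurry g)) (x, y) (0, v) (0, w)
        = ⟪Hg x y v, w⟫)
    ∧ (∀ (u : Eu p) (w : Eu q),
        fderiv ℝ (fderiv ℝ (Function.uncurry g)) (x, y) (u, 0) (0, w) = ⟪u, Jg x y w⟫) := by
  have hC1 : ContDiff ℝ 1 (fderiv ℝ (Function.uncurry g)) :=
    hg.fderiv_right (by norm_num)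
  have hB : HasFDerivAt (fderiv ℝ (Function.uncurry g))
      (fderiv ℝ (fderiv ℝ (Function.uncurry g)) (x, y)) (x, y) :=
    ((hC1.differentiable one_ne_zero) (x, y)).hasFDerivAt
  set B := fderiv ℝ (fderiv ℝ (Function.uncurry g)) (x, y) with hBdef
  constructor
  · intro v w
    have hfun : (fun y' => (fderiv ℝ (Function.uncurry g) (x, y')) ((0, w) : Eu p × Eu q))
        = fun y' => ⟪w, gradyg x y'⟫ := by
      funext y'
      rw [fderiv_uncurry_eq hg (hgradxg x y') (hgradyg x y') 0 w]
      rw [inner_zero_right, zero_add, real_inner_comm]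
    have hev : HasFDerivAt
        (fun y' => (fderiv ℝ (Function.uncurry g) (x, y')) ((0, w) : Eu p × Eu q))
        ((ContinuousLinearMap.apply ℝ ℝ ((0, w) : Eu p × Eu q)).comp
          (B.comp (ContinuousLinearMap.inr ℝ (Eu p) (Eu q)))) y :=
      (ContinuousLinearMap.apply ℝ ℝ ((0, w) : Eu p × Eu q)).hasFDerivAt.comp y
        (hB.comp y (hasFDerivAt_prodMk_right x y))
    rw [hfun] at hev
    have hother : HasFDerivAt (fun y' => ⟪w, gradyg x y'⟫)
        ((innerSL ℝ w).comp (Hg x y)) y :=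
      (innerSL ℝ w).hasFDerivAt.comp y (hHg x y)
    have e := hev.unique hother
    have := congrFun (congrArg DFunLike.coe e) v
    simp only [ContinuousLinearMap.comp_apply, ContinuousLinearMap.inr_apply,
      ContinuousLinearMap.apply_apply, innerSL_apply_apply] at this
    rw [this, real_inner_comm]
  · intro u w
    have hfun : (fun x' => (fderiv ℝ (Function.uncurry g) (x', y)) ((0, w) : Eu p × Eu q))
        = fun x' => ⟪w, gradyg x' y⟫ := by
      funext x'
      rw [fderiv_uncurry_eq hg (hgradxg x' y) (hgradyg x' y) 0 w]
      rw [inner_zero_right, zero_add, real_inner_comm]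
    have hev : HasFDerivAt
        (fun x' => (fderiv ℝ (Function.uncurry g) (x', y)) ((0, w) : Eu p × Eu q))
        ((ContinuousLinearMap.apply ℝ ℝ ((0, w) : Eu p × Eu q)).comp
          (B.comp (ContinuousLinearMap.inl ℝ (Eu p) (Eu q)))) x :=
      (ContinuousLinearMap.apply ℝ ℝ ((0, w) : Eu p × Eu q)).hasFDerivAt.comp x
        (hB.comp x (hasFDerivAt_prodMk_left x y))
    rw [hfun] at hev
    have hother : HasFDerivAt (fun x' => ⟪w, gradyg x' y⟫)
        ((innerSL ℝ w).comp (ContinuousLinearMap.adjoint (Jg x y))) x :=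
      (innerSL ℝ w).hasFDerivAt.comp x (hJg x y)
    have e := hev.unique hother
    have := congrFun (congrArg DFunLike.coe e) u
    simp only [ContinuousLinearMap.comp_apply, ContinuousLinearMap.inl_apply,
      ContinuousLinearMap.apply_apply, innerSL_apply_apply] at this
    rw [this, real_inner_comm, ContinuousLinearMap.adjoint_inner_left]

end FD



section FD
variable {p q : ℕ} {g : Eu p → Eu q → ℝ} {L μ : ℝ}
  {gradxg : Eu p → Eu q → Eu p} {gradyg : Eu p → Eu q → Eu q}
  {Hg : Eu p → Eu q → (Eu q →L[ℝ] Eu q)} {Jg : Eu p → Eu q → (Eu q →L[ℝ] Eu p)}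

/-- the second derivative quadratic form is bounded by `L` w.r.t. the ℓ² product norm -/
lemma B_bound (hg : ContDiff ℝ 2 (Function.uncurry g))
    (hgradxg : ∀ x y, HasGradientAt (fun x' => g x' y) (gradxg x y) x)
    (hgradyg : ∀ x y, HasGradientAt (fun y' => g x y') (gradyg x y) y)
    (hgradgLip : ∀ x y x' y',
      Real.sqrt (‖gradxg x y - gradxg x' y'‖ ^ 2 + ‖gradyg x y - gradyg x' y'‖ ^ 2)
        ≤ L * Real.sqrt (‖x - x'‖ ^ 2 + ‖y - y'‖ ^ 2))
    (hL : 0 ≤ L) (x : Eu p) (y : Eu q) (wx : Eu p) (wy : Eu q) :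
    |fderiv ℝ (fderiv ℝ (Function.uncurry g)) (x, y) (wx, wy) (wx, wy)|
      ≤ L * (‖wx‖ ^ 2 + ‖wy‖ ^ 2) := by
  have hC1 : ContDiff ℝ 1 (fderiv ℝ (Function.uncurry g)) :=
    hg.fderiv_right (by norm_num)
  have hB : HasFDerivAt (fderiv ℝ (Function.uncurry g))
      (fderiv ℝ (fderiv ℝ (Function.uncurry g)) (x, y)) (x, y) :=
    ((hC1.differentiable one_ne_zero) (x, y)).hasFDerivAt
  set B := fderiv ℝ (fderiv ℝ (Function.uncurry g)) (x, y) with hBdef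
  set w : Eu p × Eu q := (wx, wy) with hwdef
  have hline : HasDerivAt (fun r : ℝ => (x, y) + r • w) w 0 := by
    simpa using ((hasDerivAt_id (0:ℝ)).smul_const w).const_add (x, y)
  have hB0 : HasFDerivAt (fderiv ℝ (Function.uncurry g)) B ((fun r : ℝ => (x, y) + r • w) 0) := by
    simp only [zero_smul, add_zero]; exact hB
  have step1 : HasDerivAt (fun r : ℝ => fderiv ℝ (Function.uncurry g) ((x, y) + r • w))
      (B w) 0 := hB0.comp_hasDerivAt 0 hline
  have hd : HasDerivAt (fun r : ℝ => fderiv ℝ (Function.uncurry g) ((x, y) + r • w) w)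
      (B w w) 0 := by
    simpa using step1.clm_apply (hasDerivAt_const 0 w)
  have hpt : ∀ r : ℝ, (x, y) + r • w = (x + r • wx, y + r • wy) := by
    intro r; rw [hwdef]; rfl
  set Fr : ℝ → ℝ := fun r => fderiv ℝ (Function.uncurry g) ((x, y) + r • w) w with hFrdef
  have happ : ∀ r : ℝ, Fr r
      = ⟪gradxg (x + r • wx) (y + r • wy), wx⟫ + ⟪gradyg (x + r • wx) (y + r • wy), wy⟫ := by
    intro r
    rw [hFrdef]
    show fderiv ℝ (Function.uncurry g) ((x, y) + r • w) w = _
    rw [hpt r, hwdef]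
    exact fderiv_uncurry_eq hg (hgradxg _ _) (hgradyg _ _) wx wy
  have hlip : ∀ r : ℝ, |Fr r - Fr 0|
      ≤ (L * (‖wx‖ ^ 2 + ‖wy‖ ^ 2)) * |r| := by
    intro r
    rw [happ r, happ 0]
    have e1 : ⟪gradxg (x + r • wx) (y + r • wy), wx⟫ + ⟪gradyg (x + r • wx) (y + r • wy), wy⟫
        - (⟪gradxg (x + (0:ℝ) • wx) (y + (0:ℝ) • wy), wx⟫ + ⟪gradyg (x + (0:ℝ) • wx) (y + (0:ℝ) • wy), wy⟫)
        = ⟪gradxg (x + r • wx) (y + r • wy) - gradxg (x + (0:ℝ) • wx) (y + (0:ℝ) • wy), wx⟫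
          + ⟪gradyg (x + r • wx) (y + r • wy) - gradyg (x + (0:ℝ) • wx) (y + (0:ℝ) • wy), wy⟫ := by
      rw [inner_sub_left, inner_sub_left]; ring
    rw [e1]
    set ax := gradxg (x + r • wx) (y + r • wy) - gradxg (x + (0:ℝ) • wx) (y + (0:ℝ) • wy)
    set ay := gradyg (x + r • wx) (y + r • wy) - gradyg (x + (0:ℝ) • wx) (y + (0:ℝ) • wy)
    have h2 : |⟪ax, wx⟫ + ⟪ay, wy⟫| ≤ ‖ax‖ * ‖wx‖ + ‖ay‖ * ‖wy‖ :=
      (abs_add_le _ _).trans (add_le_add (abs_real_inner_le_norm _ _) (abs_real_inner_le_norm _ _))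
    have h3 : ‖ax‖ * ‖wx‖ + ‖ay‖ * ‖wy‖
        ≤ Real.sqrt (‖ax‖ ^ 2 + ‖ay‖ ^ 2) * Real.sqrt (‖wx‖ ^ 2 + ‖wy‖ ^ 2) :=
      cs2 (norm_nonneg _) (norm_nonneg _) (norm_nonneg _) (norm_nonneg _)
    have h4 : Real.sqrt (‖ax‖ ^ 2 + ‖ay‖ ^ 2)
        ≤ L * Real.sqrt (‖x + r • wx - (x + (0:ℝ) • wx)‖ ^ 2 + ‖y + r • wy - (y + (0:ℝ) • wy)‖ ^ 2) :=
      hgradgLip _ _ _ _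
    have e5 : x + r • wx - (x + (0:ℝ) • wx) = r • wx := by simp
    have e6 : y + r • wy - (y + (0:ℝ) • wy) = r • wy := by simp
    rw [e5, e6] at h4
    have e7 : ‖r • wx‖ ^ 2 + ‖r • wy‖ ^ 2 = r ^ 2 * (‖wx‖ ^ 2 + ‖wy‖ ^ 2) := by
      rw [norm_smul, norm_smul]; simp [mul_pow]; ring
    rw [e7] at h4
    have e8 : Real.sqrt (r ^ 2 * (‖wx‖ ^ 2 + ‖wy‖ ^ 2))
        = |r| * Real.sqrt (‖wx‖ ^ 2 + ‖wy‖ ^ 2) := by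
      rw [Real.sqrt_mul (sq_nonneg r), Real.sqrt_sq_eq_abs]
    rw [e8] at h4
    have h9 : Real.sqrt (‖wx‖ ^ 2 + ‖wy‖ ^ 2) * Real.sqrt (‖wx‖ ^ 2 + ‖wy‖ ^ 2)
        = ‖wx‖ ^ 2 + ‖wy‖ ^ 2 := Real.mul_self_sqrt (by positivity)
    calc |⟪ax, wx⟫ + ⟪ay, wy⟫| ≤ ‖ax‖ * ‖wx‖ + ‖ay‖ * ‖wy‖ := h2
      _ ≤ Real.sqrt (‖ax‖ ^ 2 + ‖ay‖ ^ 2) * Real.sqrt (‖wx‖ ^ 2 + ‖wy‖ ^ 2) := h3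
      _ ≤ (L * (|r| * Real.sqrt (‖wx‖ ^ 2 + ‖wy‖ ^ 2))) * Real.sqrt (‖wx‖ ^ 2 + ‖wy‖ ^ 2) := by
          apply mul_le_mul_of_nonneg_right h4 (Real.sqrt_nonneg _)
      _ = L * |r| * (Real.sqrt (‖wx‖ ^ 2 + ‖wy‖ ^ 2) * Real.sqrt (‖wx‖ ^ 2 + ‖wy‖ ^ 2)) := by
          ring
      _ = (L * (‖wx‖ ^ 2 + ‖wy‖ ^ 2)) * |r| := by rw [h9]; ring
  exact abs_deriv_le_of_lip hd hlip

end FD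



section FD
variable {p q : ℕ} {g : Eu p → Eu q → ℝ} {L μ : ℝ}
  {gradxg : Eu p → Eu q → Eu p} {gradyg : Eu p → Eu q → Eu q}
  {Hg : Eu p → Eu q → (Eu q →L[ℝ] Eu q)} {Jg : Eu p → Eu q → (Eu q →L[ℝ] Eu p)}



lemma Hg_symm (hg : ContDiff ℝ 2 (Function.uncurry g))
    (hgradxg : ∀ x y, HasGradientAt (fun x' => g x' y) (gradxg x y) x)
    (hgradyg : ∀ x y, HasGradientAt (fun y' => g x y') (gradyg x y) y)
    (hHg : ∀ x y, HasFDerivAt (fun y' => gradyg x y') (Hg x y) y)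
    (hJg : ∀ x y, HasFDerivAt (fun x' => gradyg x' y)
      (ContinuousLinearMap.adjoint (Jg x y)) x)
    (x : Eu p) (y : Eu q) (v w : Eu q) : ⟪Hg x y v, w⟫ = ⟪v, Hg x y w⟫ := by
  have hBf := Bfacts hg hgradxg hgradyg hHg hJg x y
  have hsym : ∀ a b : Eu p × Eu q,
      fderiv ℝ (fderiv ℝ (Function.uncurry g)) (x, y) a b
        = fderiv ℝ (fderiv ℝ (Function.uncurry g)) (x, y) b a :=
    hg.contDiffAt.isSymmSndFDerivAt (by simp [minSmoothness_of_isRCLikeNormedField])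
  rw [← hBf.1 v w, hsym, hBf.1 w v, real_inner_comm]

lemma Jg_norm (hg : ContDiff ℝ 2 (Function.uncurry g))
    (hgradxg : ∀ x y, HasGradientAt (fun x' => g x' y) (gradxg x y) x)
    (hgradyg : ∀ x y, HasGradientAt (fun y' => g x y') (gradyg x y) y)
    (hHg : ∀ x y, HasFDerivAt (fun y' => gradyg x y') (Hg x y) y)
    (hJg : ∀ x y, HasFDerivAt (fun x' => gradyg x' y)
      (ContinuousLinearMap.adjoint (Jg x y)) x)
    (hgradgLip : ∀ x y x' y',
      Real.sqrt (‖gradxg x y - gradxg x' y'‖ ^ 2 + ‖gradyg x y - gradyg x' y'‖ ^ 2)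
        ≤ L * Real.sqrt (‖x - x'‖ ^ 2 + ‖y - y'‖ ^ 2))
    (hμ : 0 < μ) (hμL : μ ≤ L) (x : Eu p) (y : Eu q)
    (hcoer : ∀ v : Eu q, μ * ‖v‖ ^ 2 ≤ ⟪Hg x y v, v⟫) :
    ‖Jg x y‖ ≤ Real.sqrt (L ^ 2 - μ ^ 2) := by
  have hL : (0:ℝ) ≤ L := le_trans hμ.le hμL
  have hBf := Bfacts hg hgradxg hgradyg hHg hJg x y
  have hsym : ∀ a b : Eu p × Eu q,
      fderiv ℝ (fderiv ℝ (Function.uncurry g)) (x, y) a b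
        = fderiv ℝ (fderiv ℝ (Function.uncurry g)) (x, y) b a :=
    hg.contDiffAt.isSymmSndFDerivAt (by simp [minSmoothness_of_isRCLikeNormedField])
  apply ContinuousLinearMap.opNorm_le_bound _ (Real.sqrt_nonneg _)
  intro v
  by_cases hJv : Jg x y v = 0
  · rw [hJv, norm_zero]; positivity
  have hv : v ≠ 0 := by rintro rfl; simp at hJv
  have hvn : (0:ℝ) < ‖v‖ := norm_pos_iff.2 hv
  set c : ℝ := ‖Jg x y v‖ with hc
  have hcpos : 0 < c := norm_pos_iff.2 hJv
  set u : Eu p := c⁻¹ • (Jg x y v) with hu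
  set vh : Eu q := ‖v‖⁻¹ • v with hvh
  have hun : ‖u‖ = 1 := by
    rw [hu, norm_smul, Real.norm_eq_abs, abs_of_nonneg (inv_nonneg.2 hcpos.le)]
    field_simp
    exact hc.symm
  have hvhn : ‖vh‖ = 1 := by
    rw [hvh, norm_smul, Real.norm_eq_abs, abs_of_nonneg (inv_nonneg.2 hvn.le)]
    field_simp
  set B := fderiv ℝ (fderiv ℝ (Function.uncurry g)) (x, y) with hB
  set a : ℝ := B (u, 0) (u, 0) with ha
  set jj : ℝ := ⟪u, Jg x y vh⟫ with hj
  set hh : ℝ := ⟪Hg x y vh, vh⟫ with hhh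
  have hhμ : μ ≤ hh := by
    have := hcoer vh
    rw [hvhn] at this
    simpa using this
  have hq : ∀ s : ℝ, |s ^ 2 * a + 2 * s * jj + hh| ≤ L * (s ^ 2 + 1) := by
    intro s
    have hw : ((s • u, vh) : Eu p × Eu q) = s • ((u, 0) : Eu p × Eu q) + ((0, vh) : Eu p × Eu q) := by
      rw [Prod.smul_mk, Prod.mk_add_mk]
      simp
    have hbb := B_bound hg hgradxg hgradyg hgradgLip hL x y (s • u) vh
    rw [← hB] at hbb
    rw [hw] at hbb
    simp only [map_add, _root_.map_smul, ContinuousLinearMap.add_apply,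
      ContinuousLinearMap.coe_smul', Pi.smul_apply, smul_eq_mul] at hbb
    have eBuv : B (u, 0) (0, vh) = jj := hBf.2 u vh
    have eBvu : B (0, vh) (u, 0) = jj := by rw [hsym]; exact hBf.2 u vh
    have eBvv : B (0, vh) (0, vh) = hh := hBf.1 vh vh
    rw [eBuv, eBvu, eBvv] at hbb
    have en : ‖s • u‖ ^ 2 + ‖vh‖ ^ 2 = s ^ 2 + 1 := by
      rw [norm_smul, hun, hvhn]
      simp [sq_abs]
    rw [en] at hbb
    calc |s ^ 2 * a + 2 * s * jj + hh|
        = |s * (s * B (u, 0) (u, 0) + jj) + (s * jj + hh)| := by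
          rw [← ha]; ring_nf
      _ ≤ L * (s ^ 2 + 1) := hbb
  have hj2 := quad_ineq hμ hhμ hq
  have hjval : jj = c * ‖v‖⁻¹ := by
    rw [hj, hvh, _root_.map_smul, real_inner_smul_right, hu, real_inner_smul_left]
    rw [real_inner_self_eq_norm_sq, ← hc]
    field_simp
  have hfin : c * ‖v‖⁻¹ ≤ Real.sqrt (L ^ 2 - μ ^ 2) := by
    apply Real.le_sqrt_of_sq_le
    rw [← hjval]; exact hj2
  calc c = (c * ‖v‖⁻¹) * ‖v‖ := by field_simp
    _ ≤ Real.sqrt (L ^ 2 - μ ^ 2) * ‖v‖ :=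
      mul_le_mul_of_nonneg_right hfin (norm_nonneg v)

end FD



lemma exists_inverse {q : ℕ} {μ : ℝ} (hμ : 0 < μ) (T : Eu q →L[ℝ] Eu q)
    (hcoer : ∀ v, μ * ‖v‖ ^ 2 ≤ ⟪T v, v⟫) (hsymm : ∀ v w, ⟪T v, w⟫ = ⟪v, T w⟫) :
    ∃ K : Eu q →L[ℝ] Eu q, (∀ w, T (K w) = w) ∧ (∀ v, K (T v) = v) ∧ ‖K‖ ≤ μ⁻¹ ∧
      (∀ v w, ⟪K v, w⟫ = ⟪v, K w⟫) := by
  have hker : ∀ v : Eu q, T v = 0 → v = 0 := by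
    intro v hv
    have h1 := hcoer v
    rw [hv] at h1
    simp only [inner_zero_left] at h1
    have h2 : ‖v‖ ^ 2 ≤ 0 := by nlinarith
    have h3 : ‖v‖ = 0 := by nlinarith [norm_nonneg v, sq_nonneg ‖v‖]
    exact norm_eq_zero.1 h3
  have hinj : Function.Injective T.toLinearMap := by
    intro v w h
    have h1 : T (v - w) = 0 := by rw [map_sub, sub_eq_zero]; exact h
    have h2 := hker _ h1
    rwa [sub_eq_zero] at h2
  have hsurj : Function.Surjective T.toLinearMap :=
    LinearMap.injective_iff_surjective.1 hinj
  let e := LinearEquiv.ofBijective T.toLinearMap ⟨hinj, hsurj⟩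
  let K : Eu q →L[ℝ] Eu q := LinearMap.toContinuousLinearMap (e.symm.toLinearMap)
  have hTK : ∀ w, T (K w) = w := fun w => e.apply_symm_apply w
  have hKT : ∀ v, K (T v) = v := fun v => e.symm_apply_apply v
  have hKnorm : ‖K‖ ≤ μ⁻¹ := by
    apply ContinuousLinearMap.opNorm_le_bound _ (by positivity)
    intro w
    by_cases h0 : K w = 0
    · rw [h0, norm_zero]; positivity
    have h1 : μ * ‖K w‖ ^ 2 ≤ ⟪T (K w), K w⟫ := hcoer (K w)
    rw [hTK w] at h1
    have h2 : ⟪w, K w⟫ ≤ ‖w‖ * ‖K w‖ := real_inner_le_norm w (K w)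
    have h3 : 0 < ‖K w‖ := norm_pos_iff.2 h0
    have h4 : μ * ‖K w‖ ≤ ‖w‖ := by nlinarith
    calc ‖K w‖ = μ⁻¹ * (μ * ‖K w‖) := by field_simp
      _ ≤ μ⁻¹ * ‖w‖ := mul_le_mul_of_nonneg_left h4 (by positivity)
  have hKsym : ∀ v w, ⟪K v, w⟫ = ⟪v, K w⟫ := by
    intro v w
    conv_lhs => rw [← hTK w]
    rw [← hsymm (K v) (K w), hTK v]
  exact ⟨K, hTK, hKT, hKnorm, hKsym⟩

section TL
variable {p q : ℕ} {τ ρ : ℝ}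
  {gradyg : Eu p → Eu q → Eu q}
  {Hg : Eu p → Eu q → (Eu q →L[ℝ] Eu q)} {Jg : Eu p → Eu q → (Eu q →L[ℝ] Eu p)}

lemma seg_norm_le {n : ℕ} (x₀ x : Eu n) :
    ∀ x' ∈ segment ℝ x₀ x, ‖x' - x₀‖ ≤ ‖x - x₀‖ := by
  rintro x' ⟨a, b, ha, hb, hab, rfl⟩
  have h1 : a • x₀ + b • x - x₀ = b • (x - x₀) := by
    rw [smul_sub]
    rw [show a = 1 - b by linarith]
    module
  rw [h1, norm_smul, Real.norm_eq_abs, abs_of_nonneg hb]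
  have := norm_nonneg (x - x₀)
  nlinarith [hab, hb]

lemma taylor_x (hτ : 0 ≤ τ)
    (hJg : ∀ x y, HasFDerivAt (fun x' => gradyg x' y)
      (ContinuousLinearMap.adjoint (Jg x y)) x)
    (hJgLip : ∀ x y x' y', ‖Jg x y - Jg x' y'‖
      ≤ τ * Real.sqrt (‖x - x'‖ ^ 2 + ‖y - y'‖ ^ 2))
    (x₀ x : Eu p) (y y₀ : Eu q) :
    ‖gradyg x y - gradyg x₀ y - (ContinuousLinearMap.adjoint (Jg x₀ y₀)) (x - x₀)‖
      ≤ τ * (‖x - x₀‖ + ‖y - y₀‖) * ‖x - x₀‖ := by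
  apply Convex.norm_image_sub_le_of_norm_hasFDerivWithin_le'
    (f' := fun x' => ContinuousLinearMap.adjoint (Jg x' y))
    (fun x' _ => (hJg x' y).hasFDerivWithinAt) ?_ (convex_segment x₀ x)
    (left_mem_segment ℝ x₀ x) (right_mem_segment ℝ x₀ x)
  intro x' hx'
  have e1 : ContinuousLinearMap.adjoint (Jg x' y) - ContinuousLinearMap.adjoint (Jg x₀ y₀)
      = ContinuousLinearMap.adjoint (Jg x' y - Jg x₀ y₀) :=
    (map_sub (ContinuousLinearMap.adjoint (𝕜 := ℝ) (E := Eu q) (F := Eu p)) _ _).symm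
  rw [e1]
  have e2 : ‖ContinuousLinearMap.adjoint (Jg x' y - Jg x₀ y₀)‖ = ‖Jg x' y - Jg x₀ y₀‖ :=
    ContinuousLinearMap.adjoint.norm_map _
  rw [e2]
  calc ‖Jg x' y - Jg x₀ y₀‖ ≤ τ * Real.sqrt (‖x' - x₀‖ ^ 2 + ‖y - y₀‖ ^ 2) :=
        hJgLip x' y x₀ y₀
    _ ≤ τ * (‖x' - x₀‖ + ‖y - y₀‖) :=
        mul_le_mul_of_nonneg_left (sqrt_sq_add_sq_le (norm_nonneg _) (norm_nonneg _)) hτ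
    _ ≤ τ * (‖x - x₀‖ + ‖y - y₀‖) := by
        apply mul_le_mul_of_nonneg_left _ hτ
        have := seg_norm_le x₀ x x' hx'
        linarith

lemma taylor_y (hρ : 0 ≤ ρ)
    (hHg : ∀ x y, HasFDerivAt (fun y' => gradyg x y') (Hg x y) y)
    (hHgLip : ∀ x y x' y', ‖Hg x y - Hg x' y'‖
      ≤ ρ * Real.sqrt (‖x - x'‖ ^ 2 + ‖y - y'‖ ^ 2))
    (x₀ : Eu p) (y₀ y : Eu q) :
    ‖gradyg x₀ y - gradyg x₀ y₀ - (Hg x₀ y₀) (y - y₀)‖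
      ≤ ρ * ‖y - y₀‖ * ‖y - y₀‖ := by
  apply Convex.norm_image_sub_le_of_norm_hasFDerivWithin_le'
    (f' := fun y' => Hg x₀ y')
    (fun y' _ => (hHg x₀ y').hasFDerivWithinAt) ?_ (convex_segment y₀ y)
    (left_mem_segment ℝ y₀ y) (right_mem_segment ℝ y₀ y)
  intro y' hy'
  calc ‖Hg x₀ y' - Hg x₀ y₀‖ ≤ ρ * Real.sqrt (‖x₀ - x₀‖ ^ 2 + ‖y' - y₀‖ ^ 2) :=
        hHgLip x₀ y' x₀ y₀
    _ = ρ * ‖y' - y₀‖ := by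
        rw [sub_self, norm_zero]
        rw [show (0:ℝ) ^ 2 + ‖y' - y₀‖ ^ 2 = ‖y' - y₀‖ ^ 2 by ring]
        rw [Real.sqrt_sq (norm_nonneg _)]
    _ ≤ ρ * ‖y - y₀‖ :=
        mul_le_mul_of_nonneg_left (seg_norm_le y₀ y y' hy') hρ

end TL



section YS
variable {p q : ℕ} {μ kA τ ρ : ℝ}
  {gradyg : Eu p → Eu q → Eu q}
  {Hg : Eu p → Eu q → (Eu q →L[ℝ] Eu q)} {Jg : Eu p → Eu q → (Eu q →L[ℝ] Eu p)}
  {ystar : Eu p → Eu q}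

lemma gradyg_x_lip (hkA : 0 ≤ kA)
    (hJg : ∀ x y, HasFDerivAt (fun x' => gradyg x' y)
      (ContinuousLinearMap.adjoint (Jg x y)) x)
    (hJnorm : ∀ x y, ‖Jg x y‖ ≤ kA) (y : Eu q) (x x' : Eu p) :
    ‖gradyg x y - gradyg x' y‖ ≤ kA * ‖x - x'‖ := by
  apply Convex.norm_image_sub_le_of_norm_hasFDerivWithin_le
    (f' := fun x'' => ContinuousLinearMap.adjoint (Jg x'' y))
    (fun x'' _ => (hJg x'' y).hasFDerivWithinAt) ?_ convex_univ (mem_univ x') (mem_univ x)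
  intro x'' _
  rw [ContinuousLinearMap.adjoint.norm_map]
  exact hJnorm x'' y

lemma ystar_lip (hμ : 0 < μ) (hkA : 0 ≤ kA)
    (hmono : ∀ x y z, μ * ‖y - z‖ ^ 2 ≤ ⟪gradyg x y - gradyg x z, y - z⟫)
    (hzero : ∀ x, gradyg x (ystar x) = 0)
    (hxlip : ∀ (y : Eu q) (x x' : Eu p), ‖gradyg x y - gradyg x' y‖ ≤ kA * ‖x - x'‖)
    (x x' : Eu p) : ‖ystar x - ystar x'‖ ≤ kA / μ * ‖x - x'‖ := by
  set Δ := ystar x - ystar x' with hΔ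
  by_cases h0 : Δ = 0
  · rw [h0, norm_zero]; positivity
  have h1 := hmono x' (ystar x) (ystar x')
  have h2 : gradyg x' (ystar x) - gradyg x' (ystar x')
      = gradyg x' (ystar x) - gradyg x (ystar x) := by
    rw [hzero x', hzero x]
  rw [← hΔ, h2] at h1
  have h3 : ⟪gradyg x' (ystar x) - gradyg x (ystar x), Δ⟫
      ≤ ‖gradyg x' (ystar x) - gradyg x (ystar x)‖ * ‖Δ‖ := real_inner_le_norm _ _
  have h4 : ‖gradyg x' (ystar x) - gradyg x (ystar x)‖ ≤ kA * ‖x' - x‖ :=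
    hxlip (ystar x) x' x
  have h5 : ‖x' - x‖ = ‖x - x'‖ := norm_sub_rev x' x
  rw [h5] at h4
  have hΔpos : 0 < ‖Δ‖ := norm_pos_iff.2 h0
  have h6 : μ * ‖Δ‖ ^ 2 ≤ kA * ‖x - x'‖ * ‖Δ‖ := by
    calc μ * ‖Δ‖ ^ 2 ≤ ⟪gradyg x' (ystar x) - gradyg x (ystar x), Δ⟫ := h1
      _ ≤ ‖gradyg x' (ystar x) - gradyg x (ystar x)‖ * ‖Δ‖ := h3
      _ ≤ kA * ‖x - x'‖ * ‖Δ‖ := mul_le_mul_of_nonneg_right h4 hΔpos.le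
  have h7 : μ * ‖Δ‖ ≤ kA * ‖x - x'‖ := by nlinarith
  calc ‖Δ‖ = μ⁻¹ * (μ * ‖Δ‖) := by field_simp
    _ ≤ μ⁻¹ * (kA * ‖x - x'‖) := mul_le_mul_of_nonneg_left h7 (by positivity)
    _ = kA / μ * ‖x - x'‖ := by field_simp

lemma ystar_deriv (hμ : 0 < μ) (hτ : 0 ≤ τ) (hρ : 0 ≤ ρ) {k : ℝ} (hk : 0 ≤ k)
    (hJg : ∀ x y, HasFDerivAt (fun x' => gradyg x' y)
      (ContinuousLinearMap.adjoint (Jg x y)) x)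
    (hJgLip : ∀ x y x' y', ‖Jg x y - Jg x' y'‖
      ≤ τ * Real.sqrt (‖x - x'‖ ^ 2 + ‖y - y'‖ ^ 2))
    (hHg : ∀ x y, HasFDerivAt (fun y' => gradyg x y') (Hg x y) y)
    (hHgLip : ∀ x y x' y', ‖Hg x y - Hg x' y'‖
      ≤ ρ * Real.sqrt (‖x - x'‖ ^ 2 + ‖y - y'‖ ^ 2))
    (hzero : ∀ x, gradyg x (ystar x) = 0)
    (hylip : ∀ x x', ‖ystar x - ystar x'‖ ≤ k * ‖x - x'‖)
    (x₀ : Eu p) (K₀ : Eu q →L[ℝ] Eu q)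
    (hKT : ∀ v, K₀ ((Hg x₀ (ystar x₀)) v) = v) (hKn : ‖K₀‖ ≤ μ⁻¹) :
    HasFDerivAt ystar
      (-(K₀.comp (ContinuousLinearMap.adjoint (Jg x₀ (ystar x₀))))) x₀ := by
  set y₀ := ystar x₀ with hy₀
  set A₀ := ContinuousLinearMap.adjoint (Jg x₀ y₀) with hA₀
  set H₀ := Hg x₀ y₀ with hH₀
  set C₃ : ℝ := μ⁻¹ * (τ * (1 + k) + ρ * k ^ 2) with hC₃
  have hC₃0 : 0 ≤ C₃ := by positivity
  have key : ∀ x : Eu p, ‖ystar x - y₀ - (-(K₀.comp A₀)) (x - x₀)‖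
      ≤ C₃ * (‖x - x₀‖ * ‖x - x₀‖) := by
    intro x
    set Y := ystar x with hY
    set Δn : ℝ := ‖x - x₀‖ with hΔn
    have hΔn0 : 0 ≤ Δn := norm_nonneg _
    have t1 := taylor_x hτ hJg hJgLip x₀ x Y y₀
    have t2 := taylor_y hρ hHg hHgLip x₀ y₀ Y
    rw [hzero x] at t1
    rw [hzero x₀] at t2
    have hYb : ‖Y - y₀‖ ≤ k * Δn := hylip x x₀
    have hE : ‖A₀ (x - x₀) + H₀ (Y - y₀)‖ ≤ (τ * (1 + k) + ρ * k ^ 2) * (Δn * Δn) := by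
      have e1 : A₀ (x - x₀) + H₀ (Y - y₀)
          = -((0 - gradyg x₀ Y - A₀ (x - x₀)) + (gradyg x₀ Y - 0 - H₀ (Y - y₀))) := by
        abel
      rw [e1, norm_neg]
      calc ‖(0 - gradyg x₀ Y - A₀ (x - x₀)) + (gradyg x₀ Y - 0 - H₀ (Y - y₀))‖
          ≤ ‖0 - gradyg x₀ Y - A₀ (x - x₀)‖ + ‖gradyg x₀ Y - 0 - H₀ (Y - y₀)‖ :=
            norm_add_le _ _
        _ ≤ τ * (Δn + ‖Y - y₀‖) * Δn + ρ * ‖Y - y₀‖ * ‖Y - y₀‖ := add_le_add t1 t2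
        _ ≤ τ * (Δn + k * Δn) * Δn + ρ * (k * Δn) * (k * Δn) := by
            apply add_le_add
            · apply mul_le_mul_of_nonneg_right _ hΔn0
              exact mul_le_mul_of_nonneg_left (by linarith) hτ
            · apply mul_le_mul (mul_le_mul_of_nonneg_left hYb hρ) hYb (norm_nonneg _)
              positivity
        _ = (τ * (1 + k) + ρ * k ^ 2) * (Δn * Δn) := by ring
    have e2 : Y - y₀ - (-(K₀.comp A₀)) (x - x₀) = K₀ (A₀ (x - x₀) + H₀ (Y - y₀)) := by
      rw [map_add]
      rw [hKT (Y - y₀)]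
      simp [ContinuousLinearMap.comp_apply]
      abel
    rw [e2]
    calc ‖K₀ (A₀ (x - x₀) + H₀ (Y - y₀))‖
        ≤ ‖K₀‖ * ‖A₀ (x - x₀) + H₀ (Y - y₀)‖ := K₀.le_opNorm _
      _ ≤ μ⁻¹ * ((τ * (1 + k) + ρ * k ^ 2) * (Δn * Δn)) := by
          apply mul_le_mul hKn hE (norm_nonneg _) (by positivity)
      _ = C₃ * (Δn * Δn) := by rw [hC₃]; ring
  rw [hasFDerivAt_iff_isLittleO_nhds_zero]
  rw [Asymptotics.isLittleO_iff]
  intro c hc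
  have hball : Metric.ball (0 : Eu p) (c / (C₃ + 1)) ∈ 𝓝 (0 : Eu p) :=
    Metric.ball_mem_nhds 0 (by positivity)
  filter_upwards [hball] with h hh
  rw [mem_ball_zero_iff] at hh
  have hk2 := key (x₀ + h)
  have e3 : x₀ + h - x₀ = h := by abel
  rw [e3] at hk2
  calc ‖ystar (x₀ + h) - y₀ - (-(K₀.comp A₀)) h‖ ≤ C₃ * (‖h‖ * ‖h‖) := hk2
    _ ≤ C₃ * ((c / (C₃ + 1)) * ‖h‖) := by
        apply mul_le_mul_of_nonneg_left _ hC₃0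
        exact mul_le_mul_of_nonneg_right hh.le (norm_nonneg _)
    _ ≤ c * ‖h‖ := by
        rw [show C₃ * (c / (C₃ + 1) * ‖h‖) = (C₃ / (C₃ + 1)) * (c * ‖h‖) by ring]
        apply mul_le_of_le_one_left (by positivity)
        rw [div_le_one (by positivity)]
        linarith

end YS



section PH
variable {p q : ℕ} {μ L M : ℝ} {f : Eu p → Eu q → ℝ}
  {gradxf : Eu p → Eu q → Eu p} {gradyf : Eu p → Eu q → Eu q}
  {Jg : Eu p → Eu q → (Eu q →L[ℝ] Eu p)}
  {ystar : Eu p → Eu q}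

lemma gradyf_le (hM : 0 ≤ M)
    (hfLip : ∀ x y x' y', |f x y - f x' y'| ≤ M * Real.sqrt (‖x - x'‖ ^ 2 + ‖y - y'‖ ^ 2))
    (hgradyf : ∀ x y, HasGradientAt (fun y' => f x y') (gradyf x y) y)
    (x : Eu p) (y : Eu q) : ‖gradyf x y‖ ≤ M := by
  have key : ∀ v : Eu q, |⟪gradyf x y, v⟫| ≤ M * ‖v‖ := by
    intro v
    have hline : HasDerivAt (fun t : ℝ => y + t • v) v 0 := by
      simpa using ((hasDerivAt_id (0:ℝ)).smul_const v).const_add y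
    have hd : HasDerivAt (fun t : ℝ => f x (y + t • v)) ⟪gradyf x y, v⟫ 0 := by
      have h1 : HasFDerivAt (fun y' => f x y')
          ((InnerProductSpace.toDual ℝ (Eu q)) (gradyf x y))
          ((fun t : ℝ => y + t • v) 0) := by
        simp only [zero_smul, add_zero]
        exact (hgradyf x y).hasFDerivAt
      simpa [InnerProductSpace.toDual_apply_apply, Function.comp_def] using h1.comp_hasDerivAt 0 hline
    apply abs_deriv_le_of_lip hd
    intro t
    have h2 := hfLip x (y + t • v) x (y + (0:ℝ) • v)
    have e1 : y + t • v - (y + (0:ℝ) • v) = t • v := by simp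
    rw [e1, sub_self, norm_zero] at h2
    have e2 : Real.sqrt ((0:ℝ) ^ 2 + ‖t • v‖ ^ 2) = |t| * ‖v‖ := by
      rw [show (0:ℝ) ^ 2 + ‖t • v‖ ^ 2 = ‖t • v‖ ^ 2 by ring, Real.sqrt_sq (norm_nonneg _),
        norm_smul, Real.norm_eq_abs]
    rw [e2] at h2
    calc |(fun t : ℝ => f x (y + t • v)) t - (fun t : ℝ => f x (y + t • v)) 0|
        = |f x (y + t • v) - f x (y + (0:ℝ) • v)| := by norm_num
      _ ≤ M * (|t| * ‖v‖) := h2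
      _ = M * ‖v‖ * |t| := by ring
  by_cases h0 : gradyf x y = 0
  · rw [h0, norm_zero]; exact hM
  have h1 := key (gradyf x y)
  rw [real_inner_self_eq_norm_sq] at h1
  have h2 : 0 < ‖gradyf x y‖ := norm_pos_iff.2 h0
  rw [abs_of_nonneg (by positivity)] at h1
  nlinarith

lemma dbound {a b : ℝ} (hμ : 0 < μ) (hμL : μ ≤ L) (ha : 0 ≤ a) (hb : 0 ≤ b)
    (h : b ≤ Real.sqrt (L ^ 2 - μ ^ 2) / μ * a) :
    Real.sqrt (a ^ 2 + b ^ 2) ≤ L / μ * a := by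
  have hL0 : (0:ℝ) < L := lt_of_lt_of_le hμ hμL
  have hsub : (0:ℝ) ≤ L ^ 2 - μ ^ 2 := by nlinarith
  have hk2 : (Real.sqrt (L ^ 2 - μ ^ 2)) ^ 2 = L ^ 2 - μ ^ 2 := Real.sq_sqrt hsub
  have h1 : b ^ 2 ≤ (L ^ 2 - μ ^ 2) / μ ^ 2 * a ^ 2 := by
    have hka : 0 ≤ Real.sqrt (L ^ 2 - μ ^ 2) / μ * a := by positivity
    have := mul_self_le_mul_self hb h
    calc b ^ 2 = b * b := sq b
      _ ≤ (Real.sqrt (L ^ 2 - μ ^ 2) / μ * a) * (Real.sqrt (L ^ 2 - μ ^ 2) / μ * a) := this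
      _ = (Real.sqrt (L ^ 2 - μ ^ 2)) ^ 2 / μ ^ 2 * a ^ 2 := by ring
      _ = (L ^ 2 - μ ^ 2) / μ ^ 2 * a ^ 2 := by rw [hk2]
  have h2 : a ^ 2 + b ^ 2 ≤ (L / μ * a) ^ 2 := by
    have e1 : (L / μ * a) ^ 2 = (1 + (L ^ 2 - μ ^ 2) / μ ^ 2) * a ^ 2 := by
      field_simp; ring
    rw [e1]
    nlinarith
  calc Real.sqrt (a ^ 2 + b ^ 2) ≤ Real.sqrt ((L / μ * a) ^ 2) := Real.sqrt_le_sqrt h2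
    _ = L / μ * a := Real.sqrt_sq (by positivity)

lemma gradPhi_formula (hf : ContDiff ℝ 2 (Function.uncurry f))
    (hgradxf : ∀ x y, HasGradientAt (fun x' => f x' y) (gradxf x y) x)
    (hgradyf : ∀ x y, HasGradientAt (fun y' => f x y') (gradyf x y) y)
    (x₀ : Eu p) (K₀ : Eu q →L[ℝ] Eu q)
    (hKsym : ∀ v w, ⟪K₀ v, w⟫ = ⟪v, K₀ w⟫)
    (hyd : HasFDerivAt ystar
      (-(K₀.comp (ContinuousLinearMap.adjoint (Jg x₀ (ystar x₀))))) x₀) :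
    gradient (fun x => f x (ystar x)) x₀
      = gradxf x₀ (ystar x₀) - Jg x₀ (ystar x₀) (K₀ (gradyf x₀ (ystar x₀))) := by
  set y₀ := ystar x₀ with hy₀
  set D := -(K₀.comp (ContinuousLinearMap.adjoint (Jg x₀ y₀))) with hD
  have hprod : HasFDerivAt (fun x => (x, ystar x))
      ((ContinuousLinearMap.id ℝ (Eu p)).prod D) x₀ := HasFDerivAt.prodMk (hasFDerivAt_id x₀) hyd
  have hDf : HasFDerivAt (Function.uncurry f) (fderiv ℝ (Function.uncurry f) (x₀, y₀))
      (x₀, y₀) := ((hf.differentiable (by norm_num)) (x₀, y₀)).hasFDerivAt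
  have hDf' : HasFDerivAt (Function.uncurry f) (fderiv ℝ (Function.uncurry f) (x₀, y₀))
      ((fun x => (x, ystar x)) x₀) := hDf
  have hcomp := hDf'.comp x₀ hprod
  have hGr : HasGradientAt (fun x => f x (ystar x))
      (gradxf x₀ y₀ - Jg x₀ y₀ (K₀ (gradyf x₀ y₀))) x₀ := by
    rw [hasGradientAt_iff_hasFDerivAt]
    have heq : (InnerProductSpace.toDual ℝ (Eu p))
        (gradxf x₀ y₀ - Jg x₀ y₀ (K₀ (gradyf x₀ y₀)))
        = (fderiv ℝ (Function.uncurry f) (x₀, y₀)).comp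
          ((ContinuousLinearMap.id ℝ (Eu p)).prod D) := by
      ext u
      rw [InnerProductSpace.toDual_apply_apply]
      rw [ContinuousLinearMap.comp_apply]
      have e1 : ((ContinuousLinearMap.id ℝ (Eu p)).prod D) u = (u, D u) := rfl
      rw [e1]
      rw [fderiv_uncurry_eq hf (hgradxf x₀ y₀) (hgradyf x₀ y₀) u (D u)]
      have e2 : D u = -(K₀ ((ContinuousLinearMap.adjoint (Jg x₀ y₀)) u)) := rfl
      rw [e2]
      rw [inner_neg_right]
      rw [show ⟪gradyf x₀ y₀, K₀ ((ContinuousLinearMap.adjoint (Jg x₀ y₀)) u)⟫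
          = ⟪K₀ (gradyf x₀ y₀), (ContinuousLinearMap.adjoint (Jg x₀ y₀)) u⟫ from
        (hKsym (gradyf x₀ y₀) _).symm]
      rw [ContinuousLinearMap.adjoint_inner_right]
      rw [inner_sub_left]
      ring
    rw [heq]
    exact hcomp
  exact hGr.gradient

end PH

lemma const_split {L μ M τ ρ : ℝ} (hμ0 : μ ≠ 0) :
    L + (2 * L ^ 2 + τ * M ^ 2) / μ + (ρ * L * M + L ^ 3 + τ * M * L) / μ ^ 2
        + ρ * L ^ 2 * M / μ ^ 3
      = (L + τ * (μ⁻¹ * M) + L * (μ⁻¹ * (ρ * (μ⁻¹ * M))) + L * (μ⁻¹ * L)) * (L / μ)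
        + (L + (L ^ 2 + τ * M ^ 2) / μ + ρ * L * M / μ ^ 2) := by
  field_simp
  ring

set_option maxHeartbeats 2000000 in
/-- Lemma on smoothness of `Φ`: the gradient of the total objective
`Φ(x) = f(x, y*(x))` is `L_Φ`-Lipschitz, with
`L_Φ = L + (2L² + τM²)/μ + (ρLM + L³ + τML)/μ² + ρL²M/μ³`. -/
theorem gradPhi_lipschitz {p q : ℕ}
    (f g : Eu p → Eu q → ℝ)
    (hf : ContDiff ℝ 2 (Function.uncurry f))
    (hg : ContDiff ℝ 2 (Function.uncurry g))
    (μ L M τ ρ : ℝ) (hμ : 0 < μ) (hμL : μ ≤ L)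
    (gradxf gradxg : Eu p → Eu q → Eu p)
    (gradyf gradyg : Eu p → Eu q → Eu q)
    (hgradxf : ∀ x y, HasGradientAt (fun x' => f x' y) (gradxf x y) x)
    (hgradyf : ∀ x y, HasGradientAt (fun y' => f x y') (gradyf x y) y)
    (hgradxg : ∀ x y, HasGradientAt (fun x' => g x' y) (gradxg x y) x)
    (hgradyg : ∀ x y, HasGradientAt (fun y' => g x y') (gradyg x y) y)
    (Hg : Eu p → Eu q → (Eu q →L[ℝ] Eu q))
    (Jg : Eu p → Eu q → (Eu q →L[ℝ] Eu p))
    (hHg : ∀ x y, HasFDerivAt (fun y' => gradyg x y') (Hg x y) y)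
    (hJg : ∀ x y, HasFDerivAt (fun x' => gradyg x' y) (ContinuousLinearMap.adjoint (Jg x y)) x)
    (hsc : ∀ x, StrongConvexOn Set.univ μ (g x))
    (hfLip : ∀ x y x' y', |f x y - f x' y'| ≤ M * Real.sqrt (‖x - x'‖ ^ 2 + ‖y - y'‖ ^ 2))
    (hgradfLip : ∀ x y x' y',
      Real.sqrt (‖gradxf x y - gradxf x' y'‖ ^ 2 + ‖gradyf x y - gradyf x' y'‖ ^ 2)
        ≤ L * Real.sqrt (‖x - x'‖ ^ 2 + ‖y - y'‖ ^ 2))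
    (hgradgLip : ∀ x y x' y',
      Real.sqrt (‖gradxg x y - gradxg x' y'‖ ^ 2 + ‖gradyg x y - gradyg x' y'‖ ^ 2)
        ≤ L * Real.sqrt (‖x - x'‖ ^ 2 + ‖y - y'‖ ^ 2))
    (hJgLip : ∀ x y x' y', ‖Jg x y - Jg x' y'‖ ≤ τ * Real.sqrt (‖x - x'‖ ^ 2 + ‖y - y'‖ ^ 2))
    (hHgLip : ∀ x y x' y', ‖Hg x y - Hg x' y'‖ ≤ ρ * Real.sqrt (‖x - x'‖ ^ 2 + ‖y - y'‖ ^ 2))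
    (ystar : Eu p → Eu q)
    (hystar : ∀ x, IsMinOn (g x) Set.univ (ystar x))
    (hM : 0 ≤ M) (hτ : 0 ≤ τ) (hρ : 0 ≤ ρ)
    (LΦ : ℝ)
    (hLΦ : LΦ = L + (2 * L ^ 2 + τ * M ^ 2) / μ + (ρ * L * M + L ^ 3 + τ * M * L) / μ ^ 2
        + ρ * L ^ 2 * M / μ ^ 3) :
    ∀ x x' : Eu p,
      ‖gradient (fun x'' => f x'' (ystar x'')) x - gradient (fun x'' => f x'' (ystar x'')) x'‖
        ≤ LΦ * ‖x - x'‖ := by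
  intro x x'
  have hL0 : (0:ℝ) < L := lt_of_lt_of_le hμ hμL
  set kA : ℝ := Real.sqrt (L ^ 2 - μ ^ 2) with hkA
  have hkA0 : (0:ℝ) ≤ kA := Real.sqrt_nonneg _
  have hkAL : kA ≤ L := by
    rw [hkA]
    calc Real.sqrt (L ^ 2 - μ ^ 2) ≤ Real.sqrt (L ^ 2) := Real.sqrt_le_sqrt (by nlinarith)
      _ = L := Real.sqrt_sq hL0.le
  have hzero : ∀ x0, gradyg x0 (ystar x0) = 0 := fun x0 =>
    min_grad_zero (hystar x0) (hgradyg x0 (ystar x0))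
  have hmono : ∀ x0 (yy zz : Eu q), μ * ‖yy - zz‖ ^ 2
      ≤ ⟪gradyg x0 yy - gradyg x0 zz, yy - zz⟫ :=
    fun x0 => grad_mono hμ (hsc x0) (hgradyg x0)
  have hcoer : ∀ x0 y0 (v : Eu q), μ * ‖v‖ ^ 2 ≤ ⟪Hg x0 y0 v, v⟫ :=
    fun x0 y0 => grad_mono' (hmono x0) (hHg x0 y0)
  have hHsym : ∀ x0 y0 (v w : Eu q), ⟪Hg x0 y0 v, w⟫ = ⟪v, Hg x0 y0 w⟫ :=
    fun x0 y0 => Hg_symm hg hgradxg hgradyg hHg hJg x0 y0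
  have hJn : ∀ x0 y0, ‖Jg x0 y0‖ ≤ kA := fun x0 y0 =>
    Jg_norm hg hgradxg hgradyg hHg hJg hgradgLip hμ hμL x0 y0 (hcoer x0 y0)
  have hxlip := gradyg_x_lip hkA0 hJg hJn
  have hylip : ∀ a b : Eu p, ‖ystar a - ystar b‖ ≤ kA / μ * ‖a - b‖ :=
    ystar_lip hμ hkA0 hmono hzero hxlip
  choose K hTK hKT hKn hKsym using fun x0 =>
    exists_inverse hμ (Hg x0 (ystar x0)) (hcoer x0 (ystar x0)) (hHsym x0 (ystar x0))
  have hk0 : (0:ℝ) ≤ kA / μ := by positivity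
  have hyd : ∀ x0, HasFDerivAt ystar
      (-((K x0).comp (ContinuousLinearMap.adjoint (Jg x0 (ystar x0))))) x0 :=
    fun x0 => ystar_deriv hμ hτ hρ hk0 hJg hJgLip hHg hHgLip hzero hylip x0 (K x0)
      (hKT x0) (hKn x0)
  have hgrad : ∀ x0, gradient (fun x'' => f x'' (ystar x'')) x0
      = gradxf x0 (ystar x0) - Jg x0 (ystar x0) (K x0 (gradyf x0 (ystar x0))) :=
    fun x0 => gradPhi_formula hf hgradxf hgradyf x0 (K x0) (hKsym x0) (hyd x0)
  rw [hgrad x, hgrad x']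
  set y : Eu q := ystar x with hy
  set y' : Eu q := ystar x' with hy'
  set d : ℝ := Real.sqrt (‖x - x'‖ ^ 2 + ‖y - y'‖ ^ 2) with hd
  have hd0 : (0:ℝ) ≤ d := Real.sqrt_nonneg _
  have hdle : d ≤ L / μ * ‖x - x'‖ :=
    dbound hμ hμL (norm_nonneg _) (norm_nonneg _) (hylip x x')
  set v : Eu q := gradyf x y with hv
  set v' : Eu q := gradyf x' y' with hv'
  have hvM : ‖v‖ ≤ M := gradyf_le hM hfLip hgradyf x y
  have hvd : ‖v - v'‖ ≤ L * d := by
    calc ‖v - v'‖ ≤ Real.sqrt (‖gradxf x y - gradxf x' y'‖ ^ 2 + ‖v - v'‖ ^ 2) :=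
          le_sqrt_sq_add_sq_right _ _
      _ ≤ L * d := hgradfLip x y x' y'
  have had : ‖gradxf x y - gradxf x' y'‖ ≤ L * d := by
    calc ‖gradxf x y - gradxf x' y'‖
        ≤ Real.sqrt (‖gradxf x y - gradxf x' y'‖ ^ 2 + ‖v - v'‖ ^ 2) :=
          le_sqrt_sq_add_sq_left _ _
      _ ≤ L * d := hgradfLip x y x' y'
  have hJd : ‖Jg x y - Jg x' y'‖ ≤ τ * d := hJgLip x y x' y'
  have hHd : ‖Hg x' y' - Hg x y‖ ≤ ρ * d := by
    have h1 := hHgLip x' y' x y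
    rw [norm_sub_rev x' x, norm_sub_rev y' y] at h1
    exact h1
  have hJL' : ‖Jg x' y'‖ ≤ L := le_trans (hJn x' y') hkAL
  have hKv : ‖K x v‖ ≤ μ⁻¹ * M := by
    calc ‖K x v‖ ≤ ‖K x‖ * ‖v‖ := (K x).le_opNorm v
      _ ≤ μ⁻¹ * M := mul_le_mul (hKn x) hvM (norm_nonneg _) (by positivity)
  have hKvd : ‖K x' (v - v')‖ ≤ μ⁻¹ * (L * d) := by
    calc ‖K x' (v - v')‖ ≤ ‖K x'‖ * ‖v - v'‖ := (K x').le_opNorm _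
      _ ≤ μ⁻¹ * (L * d) := mul_le_mul (hKn x') hvd (norm_nonneg _) (by positivity)
  have hKdiff : K x v - K x' v = K x ((Hg x' y' - Hg x y) (K x' v)) := by
    have e1 : K x (Hg x y (K x' v)) = K x' v := hKT x (K x' v)
    have e2 : Hg x' y' (K x' v) = v := hTK x' v
    calc K x v - K x' v = K x v - K x (Hg x y (K x' v)) := by rw [e1]
      _ = K x (v - Hg x y (K x' v)) := by rw [map_sub]
      _ = K x (Hg x' y' (K x' v) - Hg x y (K x' v)) := by rw [e2]
      _ = K x ((Hg x' y' - Hg x y) (K x' v)) := by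
          rw [ContinuousLinearMap.sub_apply]
  have hKd : ‖K x v - K x' v‖ ≤ μ⁻¹ * (ρ * d * (μ⁻¹ * M)) := by
    rw [hKdiff]
    have h2 : ‖(Hg x' y' - Hg x y) (K x' v)‖ ≤ ρ * d * (μ⁻¹ * M) := by
      calc ‖(Hg x' y' - Hg x y) (K x' v)‖
          ≤ ‖Hg x' y' - Hg x y‖ * ‖K x' v‖ := (Hg x' y' - Hg x y).le_opNorm _
        _ ≤ ρ * d * (μ⁻¹ * M) := by
            apply mul_le_mul hHd _ (norm_nonneg _) (by positivity)
            calc ‖K x' v‖ ≤ ‖K x'‖ * ‖v‖ := (K x').le_opNorm v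
              _ ≤ μ⁻¹ * M := mul_le_mul (hKn x') hvM (norm_nonneg _) (by positivity)
    calc ‖K x ((Hg x' y' - Hg x y) (K x' v))‖
        ≤ ‖K x‖ * ‖(Hg x' y' - Hg x y) (K x' v)‖ := (K x).le_opNorm _
      _ ≤ μ⁻¹ * (ρ * d * (μ⁻¹ * M)) :=
          mul_le_mul (hKn x) h2 (norm_nonneg _) (by positivity)
  have hdecomp : gradxf x y - Jg x y (K x v) - (gradxf x' y' - Jg x' y' (K x' v'))
      = (gradxf x y - gradxf x' y') - ((Jg x y - Jg x' y') (K x v)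
        + Jg x' y' (K x v - K x' v) + Jg x' y' (K x' (v - v'))) := by
    simp only [ContinuousLinearMap.sub_apply, map_sub]
    abel
  rw [hdecomp]
  have hB1 : ‖(Jg x y - Jg x' y') (K x v)‖ ≤ τ * d * (μ⁻¹ * M) := by
    calc ‖(Jg x y - Jg x' y') (K x v)‖ ≤ ‖Jg x y - Jg x' y'‖ * ‖K x v‖ :=
          (Jg x y - Jg x' y').le_opNorm _
      _ ≤ τ * d * (μ⁻¹ * M) := mul_le_mul hJd hKv (norm_nonneg _) (by positivity)
  have hB2 : ‖Jg x' y' (K x v - K x' v)‖ ≤ L * (μ⁻¹ * (ρ * d * (μ⁻¹ * M))) := by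
    calc ‖Jg x' y' (K x v - K x' v)‖ ≤ ‖Jg x' y'‖ * ‖K x v - K x' v‖ :=
          (Jg x' y').le_opNorm _
      _ ≤ L * (μ⁻¹ * (ρ * d * (μ⁻¹ * M))) :=
          mul_le_mul hJL' hKd (norm_nonneg _) hL0.le
  have hB3 : ‖Jg x' y' (K x' (v - v'))‖ ≤ L * (μ⁻¹ * (L * d)) := by
    calc ‖Jg x' y' (K x' (v - v'))‖ ≤ ‖Jg x' y'‖ * ‖K x' (v - v')‖ :=
          (Jg x' y').le_opNorm _
      _ ≤ L * (μ⁻¹ * (L * d)) := mul_le_mul hJL' hKvd (norm_nonneg _) hL0.le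
  have htot : ‖(gradxf x y - gradxf x' y') - ((Jg x y - Jg x' y') (K x v)
      + Jg x' y' (K x v - K x' v) + Jg x' y' (K x' (v - v')))‖
      ≤ (L + τ * (μ⁻¹ * M) + L * (μ⁻¹ * (ρ * (μ⁻¹ * M))) + L * (μ⁻¹ * L)) * d := by
    calc ‖(gradxf x y - gradxf x' y') - ((Jg x y - Jg x' y') (K x v)
        + Jg x' y' (K x v - K x' v) + Jg x' y' (K x' (v - v')))‖
        ≤ ‖gradxf x y - gradxf x' y'‖ + ‖(Jg x y - Jg x' y') (K x v)
          + Jg x' y' (K x v - K x' v) + Jg x' y' (K x' (v - v'))‖ := norm_sub_le _ _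
      _ ≤ ‖gradxf x y - gradxf x' y'‖ + (‖(Jg x y - Jg x' y') (K x v)
          + Jg x' y' (K x v - K x' v)‖ + ‖Jg x' y' (K x' (v - v'))‖) := by
          have := norm_add_le ((Jg x y - Jg x' y') (K x v) + Jg x' y' (K x v - K x' v))
            (Jg x' y' (K x' (v - v')))
          linarith
      _ ≤ ‖gradxf x y - gradxf x' y'‖ + (‖(Jg x y - Jg x' y') (K x v)‖
          + ‖Jg x' y' (K x v - K x' v)‖ + ‖Jg x' y' (K x' (v - v'))‖) := by
          have := norm_add_le ((Jg x y - Jg x' y') (K x v)) (Jg x' y' (K x v - K x' v))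
          linarith
      _ ≤ L * d + (τ * d * (μ⁻¹ * M) + L * (μ⁻¹ * (ρ * d * (μ⁻¹ * M)))
          + L * (μ⁻¹ * (L * d))) := by linarith [had, hB1, hB2, hB3]
      _ = (L + τ * (μ⁻¹ * M) + L * (μ⁻¹ * (ρ * (μ⁻¹ * M))) + L * (μ⁻¹ * L)) * d := by
          ring
  have hC4 : (0:ℝ) ≤ L + τ * (μ⁻¹ * M) + L * (μ⁻¹ * (ρ * (μ⁻¹ * M))) + L * (μ⁻¹ * L) := by
    positivity
  have hfin : (L + τ * (μ⁻¹ * M) + L * (μ⁻¹ * (ρ * (μ⁻¹ * M))) + L * (μ⁻¹ * L)) * (L / μ)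
      ≤ LΦ := by
    rw [hLΦ]
    have hμ0 : μ ≠ 0 := ne_of_gt hμ
    rw [const_split hμ0]
    have hrem : (0:ℝ) ≤ L + (L ^ 2 + τ * M ^ 2) / μ + ρ * L * M / μ ^ 2 := by positivity
    linarith
  calc ‖(gradxf x y - gradxf x' y') - ((Jg x y - Jg x' y') (K x v)
      + Jg x' y' (K x v - K x' v) + Jg x' y' (K x' (v - v')))‖
      ≤ (L + τ * (μ⁻¹ * M) + L * (μ⁻¹ * (ρ * (μ⁻¹ * M))) + L * (μ⁻¹ * L)) * d := htot
    _ ≤ (L + τ * (μ⁻¹ * M) + L * (μ⁻¹ * (ρ * (μ⁻¹ * M))) + L * (μ⁻¹ * L))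
        * (L / μ * ‖x - x'‖) := mul_le_mul_of_nonneg_left hdle hC4
    _ = ((L + τ * (μ⁻¹ * M) + L * (μ⁻¹ * (ρ * (μ⁻¹ * M))) + L * (μ⁻¹ * L)) * (L / μ))
        * ‖x - x'‖ := by ring
    _ ≤ LΦ * ‖x - x'‖ := mul_le_mul_of_nonneg_right hfin (norm_nonneg _)
end
end
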